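/- arXiv:2211.13326 — 9 statements merged into one kernel-verified Lean document; each statement's English description precedes it below -/
import Mathlib

section
/- Let A be a group and C ≤ A a subgroup with index [A : C] ≥ 3. Then there exist distinct elements a₁, a₂ ∈ A such that a₁, a₂, a₁⁻¹a₂, a₂a₁⁻¹ ∉ C and a₁⁻¹a₂a₁, a₁a₂a₁⁻¹, a₂⁻¹a₁a₂, a₂a₁a₂⁻¹ ∉ C. -/
theorem exists_pair_avoiding_subgroup {A : Type*} [Group A] (C : Subgroup A)
    (h : C.index = 0 ∨ 3 ≤ C.index) :
    ∃ a₁ a₂ : A, a₁ ≠ a₂ ∧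
      a₁ ∉ C ∧ a₂ ∉ C ∧ a₁⁻¹ * a₂ ∉ C ∧ a₂ * a₁⁻¹ ∉ C ∧
      a₁⁻¹ * a₂ * a₁ ∉ C ∧ a₁ * a₂ * a₁⁻¹ ∉ C ∧
      a₂⁻¹ * a₁ * a₂ ∉ C ∧ a₂ * a₁ * a₂⁻¹ ∉ C := by
  classical
  by_cases hsq : ∃ a : A, a ∉ C ∧ a * a ∉ C
  · obtain ⟨a, ha, ha2⟩ := hsq
    have hainv : a⁻¹ ∉ C := fun hmem => ha (C.inv_mem_iff.mp hmem)
    have hii : a⁻¹ * a⁻¹ ∉ C := by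
      intro hmem
      exact ha2 (by simpa [mul_inv_rev] using C.inv_mem hmem)
    refine ⟨a, a⁻¹, ?_, ha, hainv, hii, hii, ?_, ?_, ?_, ?_⟩
    · intro hEq
      apply ha2
      nth_rewrite 2 [hEq]
      simpa using C.one_mem
    · rw [show a⁻¹ * a⁻¹ * a = a⁻¹ by group]; exact hainv
    · rw [show a * a⁻¹ * a⁻¹ = a⁻¹ by group]; exact hainv
    · rw [show (a⁻¹)⁻¹ * a * a⁻¹ = a by group]; exact ha
    · rw [show a⁻¹ * a * (a⁻¹)⁻¹ = a by group]; exact ha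
  · push_neg at hsq
    -- every element outside C squares into C; C is normal
    have conj : ∀ g x : A, x ∈ C → g * x * g⁻¹ ∈ C := by
      intro g x hx
      by_cases hg : g ∈ C
      · exact C.mul_mem (C.mul_mem hg hx) (C.inv_mem hg)
      · have h1 : g * x ∉ C := by
          intro hmem
          exact hg (by simpa [mul_assoc] using C.mul_mem hmem (C.inv_mem hx))
        have h2 : g * x * (g * x) ∈ C := hsq _ h1
        have h3 : g * x * g ∈ C := by
          have := C.mul_mem h2 (C.inv_mem hx)
          simpa [mul_assoc] using this
        have hg2 : g⁻¹ * g⁻¹ ∈ C := hsq _ (fun hmem => hg (C.inv_mem_iff.mp hmem))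
        have h4 := C.mul_mem h3 hg2
        rwa [show g * x * g * (g⁻¹ * g⁻¹) = g * x * g⁻¹ by group] at h4
    have hc : ∀ g x : A, g * x * g⁻¹ ∈ C ↔ x ∈ C := by
      intro g x
      constructor
      · intro hmem
        have := conj g⁻¹ _ hmem
        rwa [show g⁻¹ * (g * x * g⁻¹) * g⁻¹⁻¹ = x by group] at this
      · exact conj g x
    obtain ⟨a, b, ha, hb, hab⟩ : ∃ a b : A, a ∉ C ∧ b ∉ C ∧ a⁻¹ * b ∉ C := by
      by_contra hno
      push_neg at hno
      have hinj : Function.Injective (fun x : A ⧸ C => decide (x = ((1 : A) : A ⧸ C))) := by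
        intro x y hxy
        induction x using QuotientGroup.induction_on with
        | H p =>
        induction y using QuotientGroup.induction_on with
        | H q =>
        simp only [decide_eq_decide] at hxy
        by_cases hp : (p : A ⧸ C) = ((1 : A) : A ⧸ C)
        · rw [hp, (hxy.mp hp)]
        · have hq : (q : A ⧸ C) ≠ ((1 : A) : A ⧸ C) := fun hq => hp (hxy.mpr hq)
          rw [QuotientGroup.eq] at hp
          rw [ne_eq, QuotientGroup.eq] at hq
          simp only [mul_one] at hp hq
          have hp' : p ∉ C := fun hm => hp (C.inv_mem hm)
          have hq' : q ∉ C := fun hm => hq (C.inv_mem hm)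
          exact (QuotientGroup.eq).mpr (hno p q hp' hq')
      have hfin : Finite (A ⧸ C) := Finite.of_injective _ hinj
      have hle : Nat.card (A ⧸ C) ≤ 2 := by
        have := Nat.card_le_card_of_injective _ hinj
        simpa [Nat.card_eq_fintype_card] using this
      have hpos : 0 < Nat.card (A ⧸ C) := Nat.card_pos
      rw [Subgroup.index] at h
      omega
    refine ⟨a, b, ?_, ha, hb, hab, ?_, ?_, ?_, ?_, ?_⟩
    · intro hEq
      apply hab
      rw [hEq]
      simpa using C.one_mem
    · intro hmem
      apply hab
      have h1 : a * b⁻¹ ∈ C := by simpa [mul_inv_rev] using C.inv_mem hmem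
      have h2 := conj b⁻¹ _ h1
      rw [show b⁻¹ * (a * b⁻¹) * b⁻¹⁻¹ = b⁻¹ * a from by group] at h2
      simpa [mul_inv_rev] using C.inv_mem h2
    · intro hmem
      have := (hc a _).mpr hmem
      rw [show a * (a⁻¹ * b * a) * a⁻¹ = b from by group] at this
      exact hb this
    · intro hmem
      have : b ∈ C := (hc a b).mp hmem
      exact hb this
    · intro hmem
      have := (hc b _).mpr hmem
      rw [show b * (b⁻¹ * a * b) * b⁻¹ = a from by group] at this
      exact ha this
    · intro hmem
      have : a ∈ C := (hc b a).mp hmem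
      exact ha this
end

section
/- A group G is the union of three proper subgroups if and only if G has a quotient isomorphic to the Klein four-group ℤ/2ℤ × ℤ/2ℤ (Scorza's theorem). -/
/-!
No group is the union of two proper subgroups, so if `G = A ∪ B ∪ C` with proper `A, B, C`,
there is some `a ∈ A \ (B ∪ C)`. Left multiplication by `a` shows that `B ∩ C ⊆ A` and that it
maps `B \ A` into `C` and `C \ A` into `B`; from this, the product of two elements outside `A`
lies in `A`, i.e. `A` has index two. The same holds for `B`, and the sign characters
`G → ℤ/2` of `A` and `B` together give a surjection onto `ℤ/2 × ℤ/2`. Conversely, the Klein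
group is the union of its three subgroups of order two, and these pull back along any
surjection.
-/

namespace Subgroup

variable {G : Type*} [Group G]

theorem not_forall_mem_or_mem {H K : Subgroup G} (hH : H ≠ ⊤) (hK : K ≠ ⊤) :
    ¬ ∀ g : G, g ∈ H ∨ g ∈ K := by
  intro hcov
  obtain ⟨x, hxH⟩ : ∃ x, x ∉ H := by simpa [eq_top_iff'] using hH
  obtain ⟨y, hyK⟩ : ∃ y, y ∉ K := by simpa [eq_top_iff'] using hK
  have hxK : x ∈ K := (hcov x).resolve_left hxH
  have hyH : y ∈ H := (hcov y).resolve_right hyK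
  rcases hcov (x * y) with hxy | hxy
  · exact hxH ((mul_mem_cancel_right hyH).1 hxy)
  · exact hyK ((mul_mem_cancel_left hxK).1 hxy)

theorem index_eq_two_of_mul_mem {H : Subgroup G} (hH : H ≠ ⊤)
    (hmul : ∀ x y, x ∉ H → y ∉ H → x * y ∈ H) : H.index = 2 := by
  obtain ⟨a, ha⟩ : ∃ a, a ∉ H := by simpa [eq_top_iff'] using hH
  exact index_eq_two_iff_exists_notMem_and'.2
    ⟨a, ha, fun b => or_iff_not_imp_right.2 (hmul a b ha)⟩

open scoped Classical in
noncomputable def indexTwoChar (H : Subgroup G) (hH : H.index = 2) :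
    G →* Multiplicative (ZMod 2) where
  toFun g := Multiplicative.ofAdd (if g ∈ H then 0 else 1)
  map_one' := by simp
  map_mul' x y := by
    rw [mul_mem_iff_of_index_two hH, ← ofAdd_add]
    split_ifs <;> simp_all; decide

theorem indexTwoChar_of_mem {H : Subgroup G} (hH : H.index = 2) {g : G} (hg : g ∈ H) :
    H.indexTwoChar hH g = 1 := by
  simp [indexTwoChar, hg]

theorem indexTwoChar_of_notMem {H : Subgroup G} (hH : H.index = 2) {g : G} (hg : g ∉ H) :
    H.indexTwoChar hH g = Multiplicative.ofAdd 1 := by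
  simp [indexTwoChar, hg]

theorem surjective_indexTwoChar_prod {A B : Subgroup G} (hA : A.index = 2) (hB : B.index = 2)
    {a b : G} (haA : a ∈ A) (haB : a ∉ B) (hbA : b ∉ A) (hbB : b ∈ B) :
    Function.Surjective ((A.indexTwoChar hA).prod (B.indexTwoChar hB)) := by
  have habA : a * b ∉ A := fun h => hbA ((mul_mem_cancel_left haA).1 h)
  have habB : a * b ∉ B := fun h => haB ((mul_mem_cancel_right hbB).1 h)
  rintro ⟨s, t⟩
  induction s using Multiplicative.rec with | ofAdd s => ?_
  induction t using Multiplicative.rec with | ofAdd t => ?_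
  have two : ∀ s : ZMod 2, s = 0 ∨ s = 1 := by decide
  rcases two s with rfl | rfl <;> rcases two t with rfl | rfl
  · exact ⟨1, by simp⟩
  · exact ⟨a, by simp [indexTwoChar_of_mem hA haA, indexTwoChar_of_notMem hB haB]⟩
  · exact ⟨b, by simp [indexTwoChar_of_notMem hA hbA, indexTwoChar_of_mem hB hbB]⟩
  · exact ⟨a * b, by simp [indexTwoChar_of_notMem hA habA, indexTwoChar_of_notMem hB habB]⟩

section Cover

variable {A B C : Subgroup G}

theorem exists_mem_notMem_notMem_of_cover (hcov : ∀ g : G, g ∈ A ∨ g ∈ B ∨ g ∈ C)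
    (hB : B ≠ ⊤) (hC : C ≠ ⊤) : ∃ a ∈ A, a ∉ B ∧ a ∉ C := by
  by_contra! h
  exact not_forall_mem_or_mem hB hC fun g => by have := hcov g; have := h g; tauto

theorem inf_le_of_cover (hcov : ∀ g : G, g ∈ A ∨ g ∈ B ∨ g ∈ C) {a : G}
    (haA : a ∈ A) (haB : a ∉ B) (haC : a ∉ C) : B ⊓ C ≤ A := by
  intro t ht
  obtain ⟨htB, htC⟩ := mem_inf.1 ht
  rcases hcov (a * t) with h | h | h
  · exact (mul_mem_cancel_left haA).1 h
  · exact absurd ((mul_mem_cancel_right htB).1 h) haB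
  · exact absurd ((mul_mem_cancel_right htC).1 h) haC

theorem mul_mem_of_cover_of_notMem_of_mem (hcov : ∀ g : G, g ∈ A ∨ g ∈ B ∨ g ∈ C)
    {a x : G} (haA : a ∈ A) (haB : a ∉ B) (hxA : x ∉ A) (hxB : x ∈ B) : a * x ∈ C := by
  rcases hcov (a * x) with h | h | h
  · exact absurd ((mul_mem_cancel_left haA).1 h) hxA
  · exact absurd ((mul_mem_cancel_right hxB).1 h) haB
  · exact h

theorem mul_mem_of_cover_of_mem_of_mem (hcov : ∀ g : G, g ∈ A ∨ g ∈ B ∨ g ∈ C)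
    {a x y : G} (haA : a ∈ A) (haB : a ∉ B) (haC : a ∉ C) (hxA : x ∉ A) (hyA : y ∉ A)
    (hxB : x ∈ B) (hyB : y ∈ B) : x * y ∈ A := by
  by_contra hxyA
  have haxC := mul_mem_of_cover_of_notMem_of_mem hcov haA haB hxA hxB
  have haxyC := mul_mem_of_cover_of_notMem_of_mem hcov haA haB hxyA (mul_mem hxB hyB)
  have hyC : y ∈ C := by simpa [mul_assoc] using mul_mem (inv_mem haxC) haxyC
  exact hyA (inf_le_of_cover hcov haA haB haC (mem_inf.2 ⟨hyB, hyC⟩))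

theorem mul_mem_of_cover (hcov : ∀ g : G, g ∈ A ∨ g ∈ B ∨ g ∈ C) {a x y : G}
    (haA : a ∈ A) (haB : a ∉ B) (haC : a ∉ C) (hxA : x ∉ A) (hyA : y ∉ A) :
    x * y ∈ A := by
  have hBC := inf_le_of_cover hcov haA haB haC
  have hcov' : ∀ g : G, g ∈ A ∨ g ∈ C ∨ g ∈ B := fun g => (hcov g).imp_right Or.symm
  rcases (hcov x).resolve_left hxA with hxB | hxC <;>
    rcases (hcov y).resolve_left hyA with hyB | hyC
  · exact mul_mem_of_cover_of_mem_of_mem hcov haA haB haC hxA hyA hxB hyB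
  · rcases hcov (x * y) with h | h | h
    · exact h
    · exact absurd (hBC (mem_inf.2 ⟨(mul_mem_cancel_left hxB).1 h, hyC⟩)) hyA
    · exact absurd (hBC (mem_inf.2 ⟨hxB, (mul_mem_cancel_right hyC).1 h⟩)) hxA
  · rcases hcov (x * y) with h | h | h
    · exact h
    · exact absurd (hBC (mem_inf.2 ⟨(mul_mem_cancel_right hyB).1 h, hxC⟩)) hxA
    · exact absurd (hBC (mem_inf.2 ⟨hyB, (mul_mem_cancel_left hxC).1 h⟩)) hyA
  · exact mul_mem_of_cover_of_mem_of_mem hcov' haA haC haB hxA hyA hxC hyC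

theorem index_eq_two_of_cover (hcov : ∀ g : G, g ∈ A ∨ g ∈ B ∨ g ∈ C) {a : G}
    (haA : a ∈ A) (haB : a ∉ B) (haC : a ∉ C) (hA : A ≠ ⊤) : A.index = 2 :=
  index_eq_two_of_mul_mem hA fun _ _ => mul_mem_of_cover hcov haA haB haC

end Cover

end Subgroup

def Group.IsUnionOfThreeProperSubgroups (G : Type*) [Group G] : Prop :=
  ∃ A B C : Subgroup G, A ≠ ⊤ ∧ B ≠ ⊤ ∧ C ≠ ⊤ ∧ ∀ g : G, g ∈ A ∨ g ∈ B ∨ g ∈ C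

theorem Group.IsUnionOfThreeProperSubgroups.of_surjective {G H : Type*} [Group G] [Group H]
    (hH : IsUnionOfThreeProperSubgroups H) (f : G →* H) (hf : Function.Surjective f) :
    IsUnionOfThreeProperSubgroups G := by
  obtain ⟨A, B, C, hA, hB, hC, hcov⟩ := hH
  have comap_ne_top {K : Subgroup H} (hK : K ≠ ⊤) : K.comap f ≠ ⊤ := fun h =>
    hK (Subgroup.comap_injective hf (h.trans (Subgroup.comap_top f).symm))
  exact ⟨A.comap f, B.comap f, C.comap f, comap_ne_top hA, comap_ne_top hB, comap_ne_top hC,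
    fun g => hcov (f g)⟩

theorem Group.isUnionOfThreeProperSubgroups_klein :
    IsUnionOfThreeProperSubgroups (Multiplicative (ZMod 2 × ZMod 2)) := by
  have ker_ne_top (φ : ZMod 2 × ZMod 2 →+ ZMod 2) (z : ZMod 2 × ZMod 2) (hz : φ z ≠ 0) :
      AddSubgroup.toSubgroup φ.ker ≠ ⊤ := fun h =>
    hz (by simpa using (Subgroup.eq_top_iff' _).1 h (Multiplicative.ofAdd z))
  refine ⟨_, _, _, ker_ne_top (.fst _ _) (1, 0) (by decide),
    ker_ne_top (.snd _ _) (0, 1) (by decide),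
    ker_ne_top (.fst _ _ + .snd _ _) (1, 0) (by decide), fun g => ?_⟩
  simp only [Multiplicative.mem_toSubgroup, AddMonoidHom.mem_ker, AddMonoidHom.add_apply,
    AddMonoidHom.coe_fst, AddMonoidHom.coe_snd]
  generalize Multiplicative.toAdd g = z
  revert z
  decide

/-- Scorza's theorem: a group is the union of three proper subgroups iff it
surjects onto the Klein four-group `ℤ/2 × ℤ/2`. -/
theorem scorza {G : Type*} [Group G] :
    (∃ A B C : Subgroup G, A ≠ ⊤ ∧ B ≠ ⊤ ∧ C ≠ ⊤ ∧
      ∀ g : G, g ∈ A ∨ g ∈ B ∨ g ∈ C) ↔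
    ∃ f : G →* Multiplicative (ZMod 2 × ZMod 2), Function.Surjective f := by
  constructor
  · rintro ⟨A, B, C, hA, hB, hC, hcov⟩
    have hcovB : ∀ g : G, g ∈ B ∨ g ∈ A ∨ g ∈ C := fun g => by have := hcov g; tauto
    obtain ⟨a, haA, haB, haC⟩ := Subgroup.exists_mem_notMem_notMem_of_cover hcov hB hC
    obtain ⟨b, hbB, hbA, hbC⟩ := Subgroup.exists_mem_notMem_notMem_of_cover hcovB hA hC
    have hA2 := Subgroup.index_eq_two_of_cover hcov haA haB haC hA
    have hB2 := Subgroup.index_eq_two_of_cover hcovB hbB hbA hbC hB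
    exact ⟨(MulEquiv.prodMultiplicative _ _).symm.toMonoidHom.comp
        ((A.indexTwoChar hA2).prod (B.indexTwoChar hB2)),
      (MulEquiv.prodMultiplicative _ _).symm.surjective.comp
        (Subgroup.surjective_indexTwoChar_prod hA2 hB2 haA haB hbA hbB)⟩
  · rintro ⟨f, hf⟩
    exact Group.isUnionOfThreeProperSubgroups_klein.of_surjective f hf
end

section
/- Let G be a finitely generated group that does not surject onto the Klein four-group ℤ/2ℤ × ℤ/2ℤ, and let A, B be proper subgroups of G. Then G admits a finite generating set S with S ∩ (A ∪ B) = ∅. -/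
/-!
Let `H` be the subgroup generated by the elements lying outside `A ∪ B`. If `H = G`, finitely many
of these elements already generate `G`, since `G` is finitely generated. Otherwise `A`, `B` and `H`
are proper subgroups covering `G`, none of them contained in the union of the other two. As in
Scorza's theorem, such a cover forces `A` and `B` to have index two, and then
`g ↦ ([g ∉ A], [g ∉ B])` maps `G` onto the Klein four-group.
-/

open Function

namespace Subgroup

variable {G : Type*} [Group G]

theorem exists_finset_subset_of_mem_closure {s : Set G} {g : G} (hg : g ∈ closure s) :
    ∃ t : Finset G, ↑t ⊆ s ∧ g ∈ closure (t : Set G) := by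
  classical
  induction hg using closure_induction with
  | mem x hx => exact ⟨{x}, by simpa using hx, subset_closure (by simp)⟩
  | one => exact ⟨∅, by simp, one_mem _⟩
  | mul x y _ _ ihx ihy =>
    obtain ⟨t, hts, hx⟩ := ihx
    obtain ⟨u, hus, hy⟩ := ihy
    refine ⟨t ∪ u, by simp [hts, hus], mul_mem ?_ ?_⟩
    · exact closure_mono (by simp) hx
    · exact closure_mono (by simp) hy
  | inv x _ ih =>
    obtain ⟨t, hts, hx⟩ := ih
    exact ⟨t, hts, inv_mem hx⟩

theorem exists_notMem_and_notMem_of_ne_top {A B : Subgroup G} (hA : A ≠ ⊤) (hB : B ≠ ⊤) :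
    ∃ g, g ∉ A ∧ g ∉ B := by
  obtain ⟨a, haA⟩ := not_forall.mp ((eq_top_iff' A).not.mp hA)
  obtain ⟨b, hbB⟩ := not_forall.mp ((eq_top_iff' B).not.mp hB)
  by_cases haB : a ∈ B
  · by_cases hbA : b ∈ A
    · exact ⟨a * b, fun h => haA ((mul_mem_cancel_right hbA).1 h),
        fun h => hbB ((mul_mem_cancel_left haB).1 h)⟩
    · exact ⟨b, hbA, hbB⟩
  · exact ⟨a, haA, haB⟩

section Cover

variable {P Q R : Subgroup G}

theorem mul_mem_of_cover_s4 (hcover : ∀ g, g ∈ P ∨ g ∈ Q ∨ g ∈ R) {x y : G}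
    (hxQ : x ∈ Q) (hxR : x ∉ R) (hyR : y ∈ R) (hyQ : y ∉ Q) : x * y ∈ P :=
  (hcover (x * y)).resolve_right <| by
    rintro (h | h)
    · exact hyQ ((mul_mem_cancel_left hxQ).1 h)
    · exact hxR ((mul_mem_cancel_right hyR).1 h)

theorem inf_le_of_cover_s4 (hcover : ∀ g, g ∈ P ∨ g ∈ Q ∨ g ∈ R) {p : G}
    (hpQ : p ∉ Q) (hpR : p ∉ R) : Q ⊓ R ≤ P := by
  intro x hx
  obtain ⟨hxQ, hxR⟩ := mem_inf.1 hx
  have hpP : p ∈ P := by simpa [hpQ, hpR] using hcover p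
  have hxpP : x * p ∈ P := (hcover (x * p)).resolve_right <| by
    rintro (h | h)
    · exact hpQ ((mul_mem_cancel_left hxQ).1 h)
    · exact hpR ((mul_mem_cancel_left hxR).1 h)
  exact (mul_mem_cancel_right hpP).1 hxpP

theorem index_eq_two_of_cover_s4 (hcover : ∀ g, g ∈ P ∨ g ∈ Q ∨ g ∈ R) {p q r : G}
    (hpQ : p ∉ Q) (hpR : p ∉ R) (hqP : q ∉ P) (hqQ : q ∈ Q) (hqR : q ∉ R)
    (hrQ : r ∉ Q) (hrR : r ∈ R) : P.index = 2 := by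
  have hcover' : ∀ g, g ∈ P ∨ g ∈ R ∨ g ∈ Q := fun g => (hcover g).imp_right Or.symm
  refine index_eq_two_iff_exists_notMem_and.2
    ⟨q, hqP, fun b => or_iff_not_imp_right.2 fun hbP => ?_⟩
  by_cases hbQ : b ∈ Q
  · have hbR : b ∉ R := fun hbR => hbP (inf_le_of_cover_s4 hcover hpQ hpR ⟨hbQ, hbR⟩)
    have hbr : b * r ∈ P := mul_mem_of_cover_s4 hcover hbQ hbR hrR hrQ
    have hrq : r⁻¹ * q ∈ P :=
      mul_mem_of_cover_s4 hcover' (inv_mem hrR) (by simpa using hrQ) hqQ hqR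
    simpa [mul_assoc] using mul_mem hbr hrq
  · have hbR : b ∈ R := by simpa [hbP, hbQ] using hcover b
    exact mul_mem_of_cover_s4 hcover' hbR hbQ hqQ hqR

end Cover

open Classical in
/-- The image of `g` in `G ⧸ H ≃ ZMod 2` when `H` has index two. -/
noncomputable def parity (H : Subgroup G) (g : G) : ZMod 2 := if g ∈ H then 0 else 1

theorem parity_mul {H : Subgroup G} (hH : H.index = 2) (a b : G) :
    H.parity (a * b) = H.parity a + H.parity b := by
  unfold parity
  rw [mul_mem_iff_of_index_two hH]
  by_cases ha : a ∈ H <;> by_cases hb : b ∈ H <;> simp [ha, hb]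
  decide

theorem exists_surjective_klein_of_index_eq_two {A B : Subgroup G} (hA : A.index = 2)
    (hB : B.index = 2) (hAB : ¬A ≤ B) (hBA : ¬B ≤ A) :
    ∃ f : G →* Multiplicative (ZMod 2 × ZMod 2), Surjective f := by
  obtain ⟨a, haA, haB⟩ := SetLike.not_le_iff_exists.mp hAB
  obtain ⟨b, hbB, hbA⟩ := SetLike.not_le_iff_exists.mp hBA
  let f : G →* Multiplicative (ZMod 2 × ZMod 2) :=
    { toFun g := Multiplicative.ofAdd (A.parity g, B.parity g)
      map_one' := by simp [parity, one_mem]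
      map_mul' x y := by
        rw [← ofAdd_add, Prod.mk_add_mk, parity_mul hA, parity_mul hB] }
  have hf : ∀ g, f g = Multiplicative.ofAdd (A.parity g, B.parity g) := fun _ => rfl
  refine ⟨f, fun z => ?_⟩
  obtain ⟨u, v⟩ := z
  fin_cases u <;> fin_cases v
  · exact ⟨1, by simp [hf, parity, one_mem]; rfl⟩
  · exact ⟨a, by simp [hf, parity, haA, haB]; rfl⟩
  · exact ⟨b, by simp [hf, parity, hbA, hbB]; rfl⟩
  · exact ⟨a * b, by
      rw [hf, parity_mul hA, parity_mul hB]; simp [parity, haA, haB, hbA, hbB]; rfl⟩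

theorem exists_surjective_klein_of_closure_ne_top {A B : Subgroup G}
    (hA : A ≠ ⊤) (hB : B ≠ ⊤) (hH : closure {g | g ∉ A ∧ g ∉ B} ≠ ⊤) :
    ∃ f : G →* Multiplicative (ZMod 2 × ZMod 2), Surjective f := by
  set H := closure {g | g ∉ A ∧ g ∉ B}
  have hcover : ∀ g, g ∈ A ∨ g ∈ B ∨ g ∈ H := fun g =>
    or_iff_not_imp_left.2 fun hgA => or_iff_not_imp_left.2 fun hgB => subset_closure ⟨hgA, hgB⟩
  have hcover' : ∀ g, g ∈ B ∨ g ∈ A ∨ g ∈ H := fun g => or_left_comm.1 (hcover g)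
  obtain ⟨c, hcA, hcB⟩ := exists_notMem_and_notMem_of_ne_top hA hB
  obtain ⟨a, haB, haH⟩ := exists_notMem_and_notMem_of_ne_top hB hH
  obtain ⟨b, hbA, hbH⟩ := exists_notMem_and_notMem_of_ne_top hA hH
  have hcH : c ∈ H := subset_closure ⟨hcA, hcB⟩
  have haA : a ∈ A := by simpa [haB, haH] using hcover a
  have hbB : b ∈ B := by simpa [hbA, hbH] using hcover b
  exact exists_surjective_klein_of_index_eq_two
    (index_eq_two_of_cover_s4 hcover haB haH hbA hbB hbH hcB hcH)
    (index_eq_two_of_cover_s4 hcover' hbA hbH haB haA haH hcA hcH)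
    (fun h => haB (h haA)) (fun h => hbA (h hbB))

end Subgroup

theorem Group.FG.exists_finset_subset_of_closure_eq_top {G : Type*} [Group G] (hG : Group.FG G)
    {s : Set G} (hs : Subgroup.closure s = ⊤) :
    ∃ t : Finset G, ↑t ⊆ s ∧ Subgroup.closure (t : Set G) = ⊤ := by
  classical
  obtain ⟨u, hu⟩ := hG.out
  choose t hts hgt using fun g =>
    Subgroup.exists_finset_subset_of_mem_closure (hs ▸ Subgroup.mem_top g)
  refine ⟨u.biUnion t, by simpa using fun g _ => hts g, ?_⟩
  rw [eq_top_iff, ← hu, Subgroup.closure_le]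
  exact fun g hg =>
    Subgroup.closure_mono (Finset.coe_subset.2 (Finset.subset_biUnion_of_mem t hg)) (hgt g)

theorem exists_generating_set_avoiding_two_proper_subgroups
    {G : Type*} [Group G] (hfg : Group.FG G)
    (hK : ¬∃ f : G →* Multiplicative (ZMod 2 × ZMod 2), Function.Surjective f)
    (A B : Subgroup G) (hA : A ≠ ⊤) (hB : B ≠ ⊤) :
    ∃ S : Finset G, Subgroup.closure (S : Set G) = ⊤ ∧
      ∀ s ∈ S, s ∉ A ∧ s ∉ B := by
  have hH : Subgroup.closure {g | g ∉ A ∧ g ∉ B} = ⊤ := by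
    by_contra hH
    exact hK (Subgroup.exists_surjective_klein_of_closure_ne_top hA hB hH)
  obtain ⟨S, hSX, hS⟩ := hfg.exists_finset_subset_of_closure_eq_top hH
  exact ⟨S, hS, fun s hs => hSX hs⟩
end

section
/- Let G be a finitely generated group and A, B proper subgroups of G. Then there exists a finite generating set S of G with |S ∩ (A ∪ B)| ≤ 1 and min{|S ∩ (A \ B)|, |S ∩ (B \ A)|} = 0. -/
open Subgroup

private def chainAux {G : Type*} [Group G] [DecidableEq G] (g : G) : List G → G → Finset G
  | [], _ => ∅
  | b :: tl, b0 => insert (b * g * b0) (chainAux g tl b)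

private lemma chainAux_avoid {G : Type*} [Group G] [DecidableEq G] (A B : Subgroup G) (g : G)
    (l : List G) (b0 : G)
    (h : ∀ b ∈ b0 :: l, b ∈ A ∧ b ∉ B ∧ g * b ∈ B ∧ g * b ∉ A) :
    ∀ x ∈ chainAux g l b0, x ∉ A ∧ x ∉ B := by
  induction l generalizing b0 with
  | nil => intro x hx; simp [chainAux] at hx
  | cons b tl ih =>
    intro x hx
    simp only [chainAux, Finset.mem_insert] at hx
    rcases hx with rfl | hx
    · obtain ⟨hbA, hbB, hgbB, hgbA⟩ := h b (by simp)
      obtain ⟨hb0A, hb0B, hgb0B, hgb0A⟩ := h b0 (by simp)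
      constructor
      · intro hmem
        exact hgb0A (by simpa [mul_assoc] using A.mul_mem (A.inv_mem hbA) hmem)
      · intro hmem
        exact hbB (by simpa [mul_assoc] using B.mul_mem hmem (B.inv_mem hgb0B))
    · refine ih b (fun c hc => ?_) x hx
      rcases List.mem_cons.mp hc with rfl | hc
      · exact h c (by simp)
      · exact h c (by simp [hc])

private lemma chainAux_closure {G : Type*} [Group G] [DecidableEq G] (g : G)
    (l : List G) (b0 : G) :
    ∀ b ∈ b0 :: l, b ∈ Subgroup.closure (insert g (insert b0 ↑(chainAux g l b0)) : Set G) := by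
  induction l generalizing b0 with
  | nil =>
    intro b hb
    rcases List.mem_cons.mp hb with rfl | hb
    · exact Subgroup.subset_closure (by simp)
    · simp at hb
  | cons c tl ih =>
    intro b hb
    set S : Set G := insert g (insert b0 ↑(chainAux g (c :: tl) b0)) with hS
    have hgS : g ∈ Subgroup.closure S := Subgroup.subset_closure (by simp [hS])
    have hb0S : b0 ∈ Subgroup.closure S := Subgroup.subset_closure (by simp [hS])
    have hcgb0 : c * g * b0 ∈ Subgroup.closure S := by
      apply Subgroup.subset_closure
      simp [hS, chainAux]
    have hcS : c ∈ Subgroup.closure S := by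
      have : c * g * b0 * b0⁻¹ * g⁻¹ ∈ Subgroup.closure S :=
        mul_mem (mul_mem hcgb0 (inv_mem hb0S)) (inv_mem hgS)
      simpa using this
    have hsub : Subgroup.closure (insert g (insert c ↑(chainAux g tl c)) : Set G) ≤
        Subgroup.closure S := by
      apply (Subgroup.closure_le _).mpr
      intro x hx
      rcases hx with rfl | hx
      · exact hgS
      rcases hx with rfl | hx
      · exact hcS
      · apply Subgroup.subset_closure
        simp only [Finset.mem_coe] at hx
        simp [hS, chainAux, hx]
    rcases List.mem_cons.mp hb with rfl | hb
    · exact hb0S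
    · exact hsub (ih c b hb)

theorem exists_generating_set_almost_avoiding_two_proper_subgroups
    {G : Type*} [Group G] (hfg : Group.FG G)
    (A B : Subgroup G) (hA : A ≠ ⊤) (hB : B ≠ ⊤) :
    ∃ S : Finset G, Subgroup.closure (S : Set G) = ⊤ ∧
      ((S : Set G) ∩ ((A : Set G) ∪ (B : Set G))).Subsingleton ∧
      ((S : Set G) ∩ ((A : Set G) \ (B : Set G)) = ∅ ∨
        (S : Set G) ∩ ((B : Set G) \ (A : Set G)) = ∅) := by
  classical
  -- find g outside A ∪ B
  obtain ⟨a, haA⟩ : ∃ a, a ∉ A := by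
    by_contra h; push_neg at h; exact hA ((Subgroup.eq_top_iff' A).mpr h)
  obtain ⟨b, hbB⟩ : ∃ b, b ∉ B := by
    by_contra h; push_neg at h; exact hB ((Subgroup.eq_top_iff' B).mpr h)
  obtain ⟨g, hgA, hgB⟩ : ∃ g, g ∉ A ∧ g ∉ B := by
    by_cases h1 : a ∈ B
    · by_cases h2 : b ∈ A
      · refine ⟨a * b, fun h => haA ?_, fun h => hbB ?_⟩
        · simpa using A.mul_mem h (A.inv_mem h2)
        · simpa using B.mul_mem (B.inv_mem h1) h
      · exact ⟨b, h2, hbB⟩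
    · exact ⟨a, haA, h1⟩
  obtain ⟨T, hT⟩ := hfg.out
  -- the replacement function
  set r : G → G := fun t =>
    if t ∉ A ∧ t ∉ B then t
    else if g * t ∉ A ∧ g * t ∉ B then g * t
    else if g * (g * t) ∉ A ∧ g * (g * t) ∉ B then g * (g * t)
    else if t ∈ A then t else g * t with hr
  have key : ∀ t : G, ((r t ∉ A ∧ r t ∉ B) ∨
      (r t ∈ A ∧ r t ∉ B ∧ g * r t ∈ B ∧ g * r t ∉ A)) ∧
      t ∈ Subgroup.closure ({g, r t} : Set G) := by
    intro t
    have hgc : g ∈ Subgroup.closure ({g, r t} : Set G) := Subgroup.subset_closure (by simp)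
    have hrc : r t ∈ Subgroup.closure ({g, r t} : Set G) := Subgroup.subset_closure (by simp)
    have hclos : (r t = t ∨ r t = g * t ∨ r t = g * (g * t)) →
        t ∈ Subgroup.closure ({g, r t} : Set G) := by
      rintro (h | h | h)
      · rw [h] at hrc ⊢; exact hrc
      · have h2 := mul_mem (inv_mem hgc) hrc
        rw [h] at h2 ⊢; rw [inv_mul_cancel_left] at h2; exact h2
      · have h2 := mul_mem (inv_mem hgc) (mul_mem (inv_mem hgc) hrc)
        rw [h] at h2 ⊢; rw [inv_mul_cancel_left, inv_mul_cancel_left] at h2; exact h2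
    by_cases h1 : t ∉ A ∧ t ∉ B
    · have hrt : r t = t := by simp only [hr]; rw [if_pos h1]
      exact ⟨Or.inl (by rw [hrt]; exact h1), hclos (Or.inl hrt)⟩
    by_cases h2 : g * t ∉ A ∧ g * t ∉ B
    · have hrt : r t = g * t := by simp only [hr]; rw [if_neg h1, if_pos h2]
      exact ⟨Or.inl (by rw [hrt]; exact h2), hclos (Or.inr (Or.inl hrt))⟩
    by_cases h3 : g * (g * t) ∉ A ∧ g * (g * t) ∉ B
    · have hrt : r t = g * (g * t) := by
        simp only [hr]; rw [if_neg h1, if_neg h2, if_pos h3]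
      exact ⟨Or.inl (by rw [hrt]; exact h3), hclos (Or.inr (Or.inr hrt))⟩
    -- bad cases
    by_cases htA : t ∈ A
    · -- then t ∈ A \ B and g*t ∈ B \ A
      have hrt : r t = t := by
        simp only [hr]; rw [if_neg h1, if_neg h2, if_neg h3, if_pos htA]
      have hgtA : g * t ∉ A := fun h => hgA (by simpa using A.mul_mem h (A.inv_mem htA))
      have hgtB : g * t ∈ B := by by_contra hc; exact h2 ⟨hgtA, hc⟩
      have htB : t ∉ B := fun htB =>
        hgB (by simpa using B.mul_mem hgtB (B.inv_mem htB))
      refine ⟨Or.inr ⟨?_, ?_, ?_, ?_⟩, hclos (Or.inl hrt)⟩ <;> rw [hrt]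
      exacts [htA, htB, hgtB, hgtA]
    · -- t ∈ B \ A, g*t ∈ A \ B, g*(g*t) ∈ B \ A
      have htB : t ∈ B := by by_contra hc; exact h1 ⟨htA, hc⟩
      have hrt : r t = g * t := by
        simp only [hr]; rw [if_neg h1, if_neg h2, if_neg h3, if_neg htA]
      have hgtB : g * t ∉ B := fun h => hgB (by simpa using B.mul_mem h (B.inv_mem htB))
      have hgtA : g * t ∈ A := by by_contra hc; exact h2 ⟨hc, hgtB⟩
      have hg2A : g * (g * t) ∉ A := fun h =>
        hgA (by have := A.mul_mem h (A.inv_mem hgtA); rwa [mul_inv_cancel_right] at this)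
      have hg2B : g * (g * t) ∈ B := by by_contra hc; exact h3 ⟨hg2A, hc⟩
      refine ⟨Or.inr ⟨?_, ?_, ?_, ?_⟩, hclos (Or.inr (Or.inl hrt))⟩ <;> rw [hrt]
      exacts [hgtA, hgtB, hg2B, hg2A]
  -- split images into good and bad
  set T' : Finset G := T.image r with hT'
  set Bads : Finset G := T'.filter (fun x => x ∈ A) with hBads
  set Goods : Finset G := T'.filter (fun x => x ∉ A) with hGoods
  have hT'prop : ∀ x ∈ T', (x ∉ A ∧ x ∉ B) ∨ (x ∈ A ∧ x ∉ B ∧ g * x ∈ B ∧ g * x ∉ A) := by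
    intro x hx
    obtain ⟨t, _, rfl⟩ := Finset.mem_image.mp hx
    exact (key t).1
  have hGoodsProp : ∀ x ∈ Goods, x ∉ A ∧ x ∉ B := by
    intro x hx
    rw [hGoods, Finset.mem_filter] at hx
    rcases hT'prop x hx.1 with h | h
    · exact h
    · exact absurd h.1 hx.2
  have hBadsProp : ∀ x ∈ Bads, x ∈ A ∧ x ∉ B ∧ g * x ∈ B ∧ g * x ∉ A := by
    intro x hx
    rw [hBads, Finset.mem_filter] at hx
    rcases hT'prop x hx.1 with h | h
    · exact absurd hx.2 h.1
    · exact h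
  rcases hl : Bads.toList with _ | ⟨b0, l⟩
  · -- no bad elements
    refine ⟨insert g Goods, ?_, ?_, Or.inl ?_⟩
    · rw [eq_top_iff, ← hT, Subgroup.closure_le]
      intro t ht
      refine (Subgroup.closure_mono ?_ : _ ≤ _) ((key t).2)
      intro x hx
      rcases hx with rfl | hx
      · simp
      · rw [Set.mem_singleton_iff] at hx
        subst hx
        have hrT' : r t ∈ T' := Finset.mem_image_of_mem r ht
        have hG : r t ∈ Goods := by
          by_cases h : r t ∈ A
          · exact absurd (Finset.mem_toList.mpr (Finset.mem_filter.mpr ⟨hrT', h⟩))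
              (by rw [hl]; simp)
          · exact Finset.mem_filter.mpr ⟨hrT', h⟩
        simp [hG]
    · intro x hx y hy
      exfalso
      obtain ⟨hxS, hxAB⟩ := hx
      simp only [Finset.coe_insert, Set.mem_insert_iff, Finset.mem_coe] at hxS
      rcases hxS with rfl | hxS
      · rcases (Set.mem_union _ _ _).mp hxAB with h | h
        · exact hgA h
        · exact hgB h
      · rcases (Set.mem_union _ _ _).mp hxAB with h | h
        · exact (hGoodsProp x hxS).1 h
        · exact (hGoodsProp x hxS).2 h
    · rw [Set.eq_empty_iff_forall_notMem]
      intro x hx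
      obtain ⟨hxS, hxd⟩ := hx
      rcases (Set.mem_diff x).mp hxd with ⟨hxA, hxB⟩
      simp only [Finset.coe_insert, Set.mem_insert_iff, Finset.mem_coe] at hxS
      rcases hxS with rfl | hxS
      · exact hgA hxA
      · exact (hGoodsProp x hxS).1 hxA
  · -- at least one bad element b0
    have hlmem : ∀ c ∈ b0 :: l, c ∈ A ∧ c ∉ B ∧ g * c ∈ B ∧ g * c ∉ A := by
      intro c hc
      exact hBadsProp c (Finset.mem_toList.mp (hl ▸ hc))
    have hb0 := hlmem b0 (by simp)
    set C : Finset G := chainAux g l b0 with hC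
    have hCavoid : ∀ x ∈ C, x ∉ A ∧ x ∉ B := chainAux_avoid A B g l b0 hlmem
    have hmemS : ∀ z ∈ (insert g (insert b0 (Goods ∪ C)) : Finset G),
        z = g ∨ z = b0 ∨ z ∈ Goods ∨ z ∈ C := by
      intro z hz
      simpa [Finset.mem_insert, Finset.mem_union, or_assoc] using hz
    refine ⟨insert g (insert b0 (Goods ∪ C)), ?_, ?_, Or.inr ?_⟩
    · rw [eq_top_iff, ← hT, Subgroup.closure_le]
      intro t ht
      set S : Finset G := insert g (insert b0 (Goods ∪ C)) with hS
      have hgS : g ∈ Subgroup.closure (S : Set G) :=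
        Subgroup.subset_closure (by simp [hS])
      have hrS : r t ∈ Subgroup.closure (S : Set G) := by
        have hrT' : r t ∈ T' := Finset.mem_image_of_mem r ht
        by_cases h : r t ∈ A
        · have hmem : r t ∈ b0 :: l := by
            rw [← hl]
            exact Finset.mem_toList.mpr (Finset.mem_filter.mpr ⟨hrT', h⟩)
          have hcl := chainAux_closure g l b0 (r t) hmem
          refine (Subgroup.closure_mono ?_ : _ ≤ Subgroup.closure (S : Set G)) hcl
          intro x hx
          rcases hx with rfl | hx
          · simp [hS]
          rcases hx with rfl | hx
          · simp [hS]
          · simp only [Finset.mem_coe] at hx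
            simp only [Finset.coe_insert, Set.mem_insert_iff, Finset.mem_coe, hS]
            right; right
            simp [Finset.mem_union, hC, hx]
        · exact Subgroup.subset_closure
            (by
              have : r t ∈ Goods := Finset.mem_filter.mpr ⟨hrT', h⟩
              simp [hS, Finset.mem_union, this])
      have hle : Subgroup.closure ({g, r t} : Set G) ≤ Subgroup.closure (S : Set G) := by
        apply (Subgroup.closure_le _).mpr
        rintro x (rfl | hx)
        · exact hgS
        · rw [Set.mem_singleton_iff] at hx; subst hx; exact hrS
      exact hle ((key t).2)
    · intro x hx y hy
      have hb0only : ∀ z, z ∈ (insert g (insert b0 (Goods ∪ C)) : Finset G) →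
          z ∈ (A : Set G) ∪ (B : Set G) → z = b0 := by
        intro z hz hzAB
        rcases hmemS z hz with rfl | rfl | hz' | hz'
        · exfalso
          rcases (Set.mem_union _ _ _).mp hzAB with h | h
          · exact hgA h
          · exact hgB h
        · rfl
        · exfalso
          rcases (Set.mem_union _ _ _).mp hzAB with h | h
          · exact (hGoodsProp z hz').1 h
          · exact (hGoodsProp z hz').2 h
        · exfalso
          rcases (Set.mem_union _ _ _).mp hzAB with h | h
          · exact (hCavoid z hz').1 h
          · exact (hCavoid z hz').2 h
      rw [hb0only x (Finset.mem_coe.mp hx.1) hx.2, hb0only y (Finset.mem_coe.mp hy.1) hy.2]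
    · rw [Set.eq_empty_iff_forall_notMem]
      intro x hx
      obtain ⟨hxS, hxd⟩ := hx
      rcases (Set.mem_diff x).mp hxd with ⟨hxA, hxB⟩
      rcases hmemS x (Finset.mem_coe.mp hxS) with rfl | rfl | hz | hz
      · exact hgB hxA
      · exact hb0.2.1 hxA
      · exact (hGoodsProp x hz).2 hxA
      · exact (hCavoid x hz).2 hxA
end

section
/- In the infinite dihedral group D∞ = ⟨a, b | a² = b² = 1⟩, with subgroups K = ⟨a, bab⟩ and L = ⟨b, aba⟩, the union K ∪ L contains every element of D∞ represented by a word of odd length in a and b; consequently no generating set of D∞ is contained in D∞ \ (K ∪ L). -/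
/-!
Every letter `a`, `b` is a reflection, so a word of odd length is a reflection `sr m`, and
a generating set of `D∞` must contain a reflection since the rotations form a proper subgroup.
It therefore suffices that every reflection lies in `K ∪ L`: the subgroup generated by two
reflections `sr i`, `sr j` contains every `sr (i + (j - i) * k)`, so `K = ⟨sr 0, sr 2⟩`
contains the reflections with even index and `L = ⟨sr 1, sr (-1)⟩` those with odd index.
-/

open Subgroup

theorem ZMod.exists_eq_two_mul_or_two_mul_add_one {n : ℕ} (m : ZMod n) :
    ∃ k, m = 2 * k ∨ m = 2 * k + 1 := by
  obtain ⟨k, hk | hk⟩ := Int.even_or_odd' (m.cast : ℤ)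
  all_goals
    refine ⟨k, ?_⟩
    rw [← ZMod.intCast_zmod_cast m, hk]
    push_cast
    tauto

namespace DihedralGroup

variable {n : ℕ}

def sign : DihedralGroup n →* ℤˣ where
  toFun
    | r _ => 1
    | sr _ => -1
  map_one' := rfl
  map_mul' := by rintro (i | i) (j | j) <;> simp

@[simp]
theorem sign_r (i : ZMod n) : sign (r i) = 1 := rfl

@[simp]
theorem sign_sr (i : ZMod n) : sign (sr i) = -1 := rfl

theorem exists_eq_sr_of_sign_eq_neg_one {x : DihedralGroup n} (hx : sign x = -1) :
    ∃ i, x = sr i := by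
  cases x with
  | r i => exact absurd hx (units_ne_neg_self 1)
  | sr i => exact ⟨i, rfl⟩

theorem exists_prod_eq_sr_of_odd_length {l : List (DihedralGroup n)}
    (hl : ∀ x ∈ l, ∃ i, x = sr i) (hodd : Odd l.length) : ∃ i, l.prod = sr i := by
  apply exists_eq_sr_of_sign_eq_neg_one
  have hsign : ∀ u ∈ l.map sign, u = -1 := by
    simp only [List.mem_map]
    rintro _ ⟨x, hx, rfl⟩
    obtain ⟨i, rfl⟩ := hl x hx
    exact sign_sr i
  rw [map_list_prod, List.prod_eq_pow_card _ _ hsign, List.length_map, hodd.neg_one_pow]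

theorem exists_sr_mem_of_closure_eq_top {S : Set (DihedralGroup n)} (hS : closure S = ⊤) :
    ∃ i, sr i ∈ S := by
  by_contra! hS_rot
  have hS_ker : closure S ≤ sign.ker := by
    rw [closure_le]
    rintro (i | i) hx
    · exact sign_r i
    · exact absurd hx (hS_rot i)
  have hsr : sign (sr 0 : DihedralGroup n) = 1 := hS_ker (hS ▸ mem_top _)
  exact neg_units_ne_self 1 hsr

theorem sr_mul_sr_mul_sr (i j : ZMod n) : sr i * sr j * sr i = sr (2 * i - j) := by
  rw [sr_mul_sr, r_mul_sr]
  ring_nf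

theorem sr_add_mul_mem_closure (i j k : ZMod n) :
    sr (i + (j - i) * k) ∈ closure {sr i, sr j} := by
  have hi : sr i ∈ closure {sr i, sr j} := subset_closure (Set.mem_insert _ _)
  have hj : sr j ∈ closure {sr i, sr j} := subset_closure (Set.mem_insert_of_mem _ rfl)
  have hk : sr i * (sr i * sr j) ^ (k.cast : ℤ) = sr (i + (j - i) * k) := by
    rw [sr_mul_sr, r_zpow, sr_mul_r, ZMod.intCast_zmod_cast]
  exact hk ▸ mul_mem hi (zpow_mem (mul_mem hi hj) _)

theorem sr_mem_closure_or_mem_closure (m : ZMod n) :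
    sr m ∈ closure {sr 0, sr 1 * sr 0 * sr 1} ∨ sr m ∈ closure {sr 1, sr 0 * sr 1 * sr 0} := by
  rw [sr_mul_sr_mul_sr, sr_mul_sr_mul_sr, show (2 * 1 - 0 : ZMod n) = 2 by ring,
    show (2 * 0 - 1 : ZMod n) = -1 by ring]
  rcases ZMod.exists_eq_two_mul_or_two_mul_add_one m with ⟨k, rfl | rfl⟩
  · left
    have hm : 2 * k = 0 + (2 - 0) * k := by ring
    exact hm ▸ sr_add_mul_mem_closure _ _ _
  · right
    have hm : 2 * k + 1 = 1 + (-1 - 1) * -k := by ring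
    exact hm ▸ sr_add_mul_mem_closure _ _ _

end DihedralGroup

open DihedralGroup

/-- In `D∞ = ⟨a, b | a² = b² = 1⟩` (realized as `DihedralGroup 0` with
`a = sr 0`, `b = sr 1`), with `K = ⟨a, bab⟩` and `L = ⟨b, aba⟩`, every element
represented by a word of odd length in `a` and `b` lies in `K ∪ L`; consequently
no generating set of `D∞` is disjoint from `K ∪ L`. -/
theorem dihedral_odd_words_in_union :
    ∀ (a b : DihedralGroup 0), a = DihedralGroup.sr 0 → b = DihedralGroup.sr 1 →
    ∀ (K L : Subgroup (DihedralGroup 0)),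
      K = Subgroup.closure {a, b * a * b} → L = Subgroup.closure {b, a * b * a} →
      (∀ l : List (DihedralGroup 0), (∀ x ∈ l, x = a ∨ x = b) → Odd l.length →
        l.prod ∈ K ∨ l.prod ∈ L) ∧
      ¬∃ S : Set (DihedralGroup 0), Subgroup.closure S = ⊤ ∧
        S ∩ ((K : Set (DihedralGroup 0)) ∪ (L : Set (DihedralGroup 0))) = ∅ := by
  rintro a b rfl rfl K L rfl rfl
  refine ⟨fun l hl hodd => ?_, ?_⟩
  · have hl_refl : ∀ x ∈ l, ∃ i, x = sr i := fun x hx => (hl x hx).elim (⟨0, ·⟩) (⟨1, ·⟩)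
    obtain ⟨m, hm⟩ := exists_prod_eq_sr_of_odd_length hl_refl hodd
    exact hm ▸ sr_mem_closure_or_mem_closure m
  · rintro ⟨S, hS, hdisj⟩
    obtain ⟨m, hm⟩ := exists_sr_mem_of_closure_eq_top hS
    exact Set.eq_empty_iff_forall_notMem.mp hdisj _ ⟨hm, sr_mem_closure_or_mem_closure m⟩
end

section
/- Let 1 → L → H → K → 1 be a short exact sequence of groups. Then H satisfies a nontrivial group law if and only if both L and K satisfy nontrivial group laws. -/
/-- A group satisfies a nontrivial group law if some nontrivial reduced word in
finitely many variables evaluates to the identity under every substitution. -/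
def SatisfiesLaw (G : Type*) [Group G] : Prop :=
  ∃ (n : ℕ) (w : FreeGroup (Fin n)), w ≠ 1 ∧ ∀ f : Fin n → G, FreeGroup.lift f w = 1

/-!
Laws pass to subgroups and to quotients. Conversely, if `u(x₁, …, xₘ)` is a law of the kernel
of `π : G →* K` and `v(y₁, …, yₙ)` is a law of `K`, then `u(v(y₁₁, …, y₁ₙ), …, v(yₘ₁, …, yₘₙ))`
is a law of `G`, since every inner value of `v` lies in the kernel. This word is nontrivial:
the `m` copies of `v ≠ 1` lie in distinct free factors of `F(m × n) ≅ ∗ᵢ F(n)`, each generates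
an infinite cyclic group because free groups are torsion-free, and a free product of injective
homomorphisms is injective, so the copies freely generate a free subgroup of rank `m`.
-/

open Function

namespace Monoid.CoprodI

variable {ι : Type*} {M N : ι → Type*} [∀ i, Monoid (M i)] [∀ i, Monoid (N i)]

theorem Word.prod_injective : Injective (Word.prod : Word M → CoprodI M) := by
  classical exact Word.equiv.symm.injective

def Word.map (φ : ∀ i, M i →* N i) (hφ : ∀ i, Injective (φ i)) (w : Word M) : Word N where
  toList := w.toList.map fun l => ⟨l.1, φ l.1 l.2⟩
  ne_one := by
    simp only [List.mem_map]
    rintro _ ⟨l, hl, rfl⟩ h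
    exact w.ne_one l hl (hφ l.1 (h.trans (map_one _).symm))
  chain_ne := (List.isChain_map _).mpr w.chain_ne

theorem Word.map_injective (φ : ∀ i, M i →* N i) (hφ : ∀ i, Injective (φ i)) :
    Injective (Word.map φ hφ) := by
  intro w w' h
  ext1
  refine List.map_injective_iff.mpr ?_ (congrArg Word.toList h)
  rintro ⟨i, m⟩ ⟨j, m'⟩ hij
  obtain ⟨rfl, hm⟩ := Sigma.mk.inj_iff.mp hij
  exact congrArg (Sigma.mk i) (hφ i (eq_of_heq hm))

theorem Word.prod_map (φ : ∀ i, M i →* N i) (hφ : ∀ i, Injective (φ i)) (w : Word M) :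
    (w.map φ hφ).prod = lift (fun i => of.comp (φ i)) w.prod := by
  simp [Word.prod, Word.map, map_list_prod, List.map_map, Function.comp_def]

theorem injective_lift_comp_of (φ : ∀ i, M i →* N i) (hφ : ∀ i, Injective (φ i)) :
    Injective (lift fun i => of.comp (φ i)) := by
  classical
  have hword : ∀ x, lift (fun i => of.comp (φ i)) x = (Word.map φ hφ (Word.equiv x)).prod :=
    fun x => by rw [Word.prod_map]; exact congrArg _ (Word.equiv.symm_apply_apply x).symm
  intro x y h
  rw [hword, hword] at h
  exact Word.equiv.injective (Word.map_injective φ hφ (Word.prod_injective h))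

end Monoid.CoprodI

namespace FreeGroup

open Monoid (CoprodI)

theorem injective_lift_unit {G : Type*} [Group G] [IsMulTorsionFree G] {g : G} (hg : g ≠ 1) :
    Injective (lift fun _ : Unit => g) := by
  rw [injective_iff_map_eq_one]
  intro x hx
  obtain ⟨k, rfl⟩ : ∃ k : ℤ, of () ^ k = x := ⟨_, freeGroupUnitEquivInt.left_inv x⟩
  rw [map_zpow, lift_apply_of] at hx
  have hk : k = 0 :=
    injective_zpow_iff_not_isOfFinOrder.mpr (not_isOfFinOrder_of_isMulTorsionFree hg)
      (hx.trans (zpow_zero g).symm)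
  rw [hk, zpow_zero]

theorem apply_lift {α G H : Type*} [Group G] [Group H] (φ : G →* H) (g : α → G)
    (x : FreeGroup α) : φ (lift g x) = lift (φ ∘ g) x := by
  rw [← MonoidHom.comp_apply]
  congr 1
  ext
  simp

theorem injective_lift_map_prodMk {α β : Type*} {v : FreeGroup β} (hv : v ≠ 1) :
    Injective (lift fun a : α => map (Prod.mk a) v) := by
  let Φ : FreeGroup (α × β) →* CoprodI fun _ : α => FreeGroup β :=
    lift fun p => CoprodI.of (i := p.1) (of p.2)
  let ψ : (CoprodI fun _ : α => FreeGroup Unit) →* CoprodI fun _ : α => FreeGroup β :=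
    CoprodI.lift fun a => (CoprodI.of (i := a)).comp (lift fun _ : Unit => v)
  have hcomm : Φ.comp (lift fun a => map (Prod.mk a) v) =
      ψ.comp freeGroupEquivCoprodI.toMonoidHom := by
    ext a
    have hblock : Φ (map (Prod.mk a) v) = CoprodI.of (i := a) v := by
      conv_rhs => rw [← lift_of_apply v, apply_lift]
      rw [map_eq_lift, apply_lift]
      congr 2
    simpa [ψ, freeGroupEquivCoprodI] using hblock
  have hinj : Injective (ψ.comp freeGroupEquivCoprodI.toMonoidHom) :=
    (CoprodI.injective_lift_comp_of _ fun _ => injective_lift_unit hv).comp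
      freeGroupEquivCoprodI.injective
  rw [← hcomm, MonoidHom.coe_comp] at hinj
  exact hinj.of_comp

end FreeGroup

namespace SatisfiesLaw

variable {G H : Type*} [Group G] [Group H]

theorem of_word {α : Type*} [Finite α] {w : FreeGroup α} (hw : w ≠ 1)
    (hlaw : ∀ f : α → G, FreeGroup.lift f w = 1) : SatisfiesLaw G := by
  obtain ⟨n, ⟨e⟩⟩ := Finite.exists_equiv_fin α
  refine ⟨n, FreeGroup.freeGroupCongr e w, (map_ne_one_iff _ (MulEquiv.injective _)).mpr hw,
    fun f => ?_⟩
  change FreeGroup.lift f (FreeGroup.map e w) = 1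
  rw [FreeGroup.map_eq_lift, FreeGroup.apply_lift]
  convert hlaw (f ∘ e) using 3
  funext a
  simp

theorem of_injective (φ : G →* H) (hφ : Injective φ) (hH : SatisfiesLaw H) : SatisfiesLaw G := by
  obtain ⟨n, w, hw, hlaw⟩ := hH
  refine ⟨n, w, hw, fun f => hφ ?_⟩
  rw [FreeGroup.apply_lift, map_one]
  exact hlaw _

theorem of_surjective (φ : G →* H) (hφ : Surjective φ) (hG : SatisfiesLaw G) :
    SatisfiesLaw H := by
  obtain ⟨n, w, hw, hlaw⟩ := hG
  refine ⟨n, w, hw, fun f => ?_⟩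
  obtain ⟨g, rfl⟩ : ∃ g : Fin n → G, φ ∘ g = f := hφ.comp_left f
  rw [← FreeGroup.apply_lift φ g, hlaw, map_one]

theorem of_ker {K : Type*} [Group K] (π : G →* K) (hker : SatisfiesLaw π.ker)
    (hK : SatisfiesLaw K) : SatisfiesLaw G := by
  obtain ⟨m, u, hu, hlu⟩ := hker
  obtain ⟨n, v, hv, hlv⟩ := hK
  refine of_word (w := FreeGroup.lift (fun i : Fin m => FreeGroup.map (Prod.mk i) v) u)
    ((map_ne_one_iff _ (FreeGroup.injective_lift_map_prodMk hv)).mpr hu) fun g => ?_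
  have hblock : ∀ i, FreeGroup.lift g (FreeGroup.map (Prod.mk i) v) ∈ π.ker := fun i => by
    rw [MonoidHom.mem_ker, FreeGroup.map_eq_lift, FreeGroup.apply_lift, FreeGroup.apply_lift]
    exact hlv _
  calc FreeGroup.lift g (FreeGroup.lift (fun i => FreeGroup.map (Prod.mk i) v) u)
      = π.ker.subtype (FreeGroup.lift (fun i => ⟨_, hblock i⟩) u) := by
        rw [FreeGroup.apply_lift, FreeGroup.apply_lift]; rfl
    _ = 1 := by rw [hlu, map_one]

end SatisfiesLaw

/-- For a short exact sequence `1 → L → H → K → 1`, the middle group satisfies a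
nontrivial law iff both `L` and `K` do. -/
theorem satisfiesLaw_of_shortExactSeq
    {L H K : Type*} [Group L] [Group H] [Group K]
    (ι : L →* H) (π : H →* K) (hι : Function.Injective ι)
    (hπ : Function.Surjective π) (hexact : ι.range = π.ker) :
    SatisfiesLaw H ↔ (SatisfiesLaw L ∧ SatisfiesLaw K) := by
  refine ⟨fun hH => ⟨hH.of_injective ι hι, hH.of_surjective π hπ⟩, fun ⟨hL, hK⟩ => ?_⟩
  have hL_ker : SatisfiesLaw π.ker := by
    rw [← hexact]
    exact hL.of_surjective ι.rangeRestrict ι.rangeRestrict_surjective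
  exact hL_ker.of_ker π hK
end

section
/- Let G be a finitely generated group satisfying a nontrivial group law, B ≤ G a subgroup, and φ: G → B an isomorphism. Then the HNN extension Γ = ⟨G, t | t⁻¹gt = φ(g), g ∈ G⟩ satisfies a nontrivial group law; in particular, if Γ is not cyclic, girth(Γ) < ∞. -/
/- `HasInfiniteGirth G` means: for every `r` there is a finite generating set of
`G` admitting no nontrivial relation of length less than `r`; i.e. `girth G = ∞`. -/
open scoped Classical in
def HasInfiniteGirth (G : Type*) [Group G] : Prop :=
  ∀ r : ℕ, ∃ S : Finset G, Subgroup.closure (S : Set G) = ⊤ ∧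
    ∀ w : FreeGroup {x // x ∈ S}, w ≠ 1 →
      FreeGroup.lift (fun s => (s : G)) w = 1 → r ≤ w.toWord.length

open SemidirectProduct Multiplicative
open scoped commutatorElement

universe u

def IsLaw (G : Type*) [Group G] {α : Type*} (w : FreeGroup α) : Prop :=
  ∀ f : α → G, FreeGroup.lift f w = 1

section Laws

variable {G : Type*} [Group G] {α β : Type*}

theorem IsLaw.map {w : FreeGroup α} (hw : IsLaw G w) (ψ : FreeGroup α →* FreeGroup β) :
    IsLaw G (ψ w) := fun f => by
  rw [← MonoidHom.comp_apply, FreeGroup.lift_unique ((FreeGroup.lift f).comp ψ) fun _ => rfl]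
  exact hw _

theorem IsLaw.lift_comp_eq_one {H : Type*} [Group H] {w : FreeGroup α} (hw : IsLaw G w)
    (ψ : G →* H) (g : α → G) : FreeGroup.lift (ψ ∘ g) w = 1 := by
  rw [← FreeGroup.lift_unique (ψ.comp (FreeGroup.lift g)) fun _ => by simp,
    MonoidHom.comp_apply, hw g, map_one]

theorem satisfiesLaw_of_isLaw [Finite α] {w : FreeGroup α} (hw1 : w ≠ 1) (hw : IsLaw G w) :
    SatisfiesLaw G := by
  obtain ⟨n, ⟨e⟩⟩ := Finite.exists_equiv_fin α
  exact ⟨n, FreeGroup.freeGroupCongr e w, (FreeGroup.freeGroupCongr e).map_ne_one_iff.mpr hw1,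
    hw.map (FreeGroup.freeGroupCongr e).toMonoidHom⟩

end Laws

namespace FreeGroup

theorem norm_map_le {α β : Type*} [DecidableEq α] [DecidableEq β] (f : α → β)
    (x : FreeGroup α) : (map f x).norm ≤ x.norm := by
  conv_lhs => rw [← mk_toWord (x := x), map.mk]
  exact norm_mk_le.trans (List.length_map _).le

theorem lift_bind {G : Type*} [Group G] {α β : Type u} (g : β → G) (f : α → FreeGroup β)
    (x : FreeGroup α) :
    lift g (x >>= f) = lift (fun a => lift g (f a)) x :=
  lift_unique ((lift g).comp (lift f)) fun _ => by simp

def conjCommutator (i : ℕ) : FreeGroup Bool :=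
  of true ^ i * ⁅(of true : FreeGroup Bool), of false⁆ * (of true ^ i)⁻¹

theorem conjCommutator_mem_commutator (i : ℕ) :
    conjCommutator i ∈ commutator (FreeGroup Bool) :=
  Subgroup.Normal.conj_mem inferInstance _
    (Subgroup.commutator_mem_commutator (Subgroup.mem_top _) (Subgroup.mem_top _)) _

def shiftHom : Multiplicative ℤ →* MulAut (FreeGroup ℤ) :=
  MonoidHom.mk' (fun k => freeGroupCongr (Equiv.addRight k.toAdd)) fun a b => by
    apply MulEquiv.toMonoidHom_injective
    ext k
    simp only [MulEquiv.coe_toMonoidHom, MulAut.mul_apply, freeGroupCongr_apply, map.of,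
      Equiv.coe_addRight, toAdd_mul]
    abel_nf

theorem shiftHom_of (k : Multiplicative ℤ) (j : ℤ) : shiftHom k (of j) = of (j + k.toAdd) := rfl

-- With `a = of true`, `b = of false`, `x_k = of k`: sending `a ↦ 1 ∈ ℤ`, `b ↦ x₀` maps
-- `a^i b a^{-i}` to `x_i`, hence `conjCommutator i` to `x_{i+1} x_i⁻¹`.
def toShiftSemidirect : FreeGroup Bool →* FreeGroup ℤ ⋊[shiftHom] Multiplicative ℤ :=
  lift fun b => if b then inr (ofAdd 1) else inl (of 0)

theorem toShiftSemidirect_conjCommutator (i : ℕ) :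
    toShiftSemidirect (conjCommutator i) = inl (of ((i : ℤ) + 1) * (of (i : ℤ))⁻¹) := by
  have conj_inl (k : Multiplicative ℤ) (x : FreeGroup ℤ) :
      (inr k * inl x * (inr k)⁻¹ : FreeGroup ℤ ⋊[shiftHom] Multiplicative ℤ) =
        inl (shiftHom k x) := by
    rw [inl_aut, _root_.map_inv]
  have ha : toShiftSemidirect (of true) = inr (ofAdd 1) := by simp [toShiftSemidirect]
  have hb : toShiftSemidirect (of false) = inl (of 0) := by simp [toShiftSemidirect]
  simp only [conjCommutator, commutatorElement_def, _root_.map_mul, _root_.map_inv,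
    _root_.map_pow, ha, hb]
  rw [conj_inl, ← _root_.map_inv inl, ← _root_.map_mul inl, ← _root_.map_pow inr, conj_inl,
    _root_.map_mul, _root_.map_inv, shiftHom_of, shiftHom_of, shiftHom_of]
  simp [add_comm]

def partialProd : ℕ → FreeGroup ℕ
  | 0 => 1
  | m + 1 => of m * partialProd m

-- `x_k ↦ x_{k-1} ⋯ x_0`, so that `x_{i+1} x_i⁻¹ ↦ x_i`.
def shiftRetraction : FreeGroup ℤ →* FreeGroup ℕ :=
  lift fun k => partialProd k.toNat

theorem injective_lift_conjCommutator {ι : Type*} {e : ι → ℕ} (he : Function.Injective e) :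
    Function.Injective (lift fun i => conjCommutator (e i)) := by
  let quotients : FreeGroup ι →* FreeGroup ℤ :=
    lift fun i => of ((e i : ℤ) + 1) * (of (e i : ℤ))⁻¹
  have h_semidirect : toShiftSemidirect.comp (lift fun i => conjCommutator (e i)) =
      inl.comp quotients := by
    refine ext_hom _ _ fun i => ?_
    simp [quotients, toShiftSemidirect_conjCommutator]
  have h_retraction : shiftRetraction.comp quotients = map e := by
    ext i
    simp [quotients, shiftRetraction, partialProd]
  refine Function.Injective.of_comp (f := toShiftSemidirect) ?_
  rw [← MonoidHom.coe_comp, h_semidirect, MonoidHom.coe_comp]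
  refine inl_injective.comp (Function.Injective.of_comp (f := shiftRetraction) ?_)
  rw [← MonoidHom.coe_comp, h_retraction]
  exact map_injective he

end FreeGroup

section Girth

variable {G : Type*} [Group G]

theorem SatisfiesLaw.exists_isLaw_bool (hG : SatisfiesLaw G) :
    ∃ w : FreeGroup Bool, w ≠ 1 ∧ IsLaw G w := by
  obtain ⟨n, w, hw1, hw⟩ := hG
  exact ⟨_, (map_ne_one_iff _ (FreeGroup.injective_lift_conjCommutator Fin.val_injective)).mpr
    hw1, IsLaw.map hw _⟩

theorem isCyclic_of_closure_eq_top_of_subsingleton {S : Set G} (hS : Subgroup.closure S = ⊤)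
    (hsub : S.Subsingleton) : IsCyclic G := by
  obtain ⟨x, hx⟩ : ∃ x, S ⊆ {x} := by
    rcases S.eq_empty_or_nonempty with rfl | ⟨x, hx⟩
    · exact ⟨1, Set.empty_subset _⟩
    · exact ⟨x, fun y hy => hsub hy hx⟩
  refine isCyclic_iff_exists_zpowers_eq_top.mpr ⟨x, top_unique ?_⟩
  rw [← hS, Subgroup.zpowers_eq_closure]
  exact Subgroup.closure_mono hx

theorem SatisfiesLaw.not_hasInfiniteGirth (hG : SatisfiesLaw G) (hnc : ¬IsCyclic G) :
    ¬HasInfiniteGirth G := by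
  classical
  intro hgirth
  obtain ⟨w, hw1, hw⟩ := hG.exists_isLaw_bool
  obtain ⟨S, hS, hrel⟩ := hgirth (w.norm + 1)
  obtain ⟨x, hx, y, hy, hxy⟩ : ∃ x ∈ S, ∃ y ∈ S, x ≠ y := by
    by_contra! h
    exact hnc (isCyclic_of_closure_eq_top_of_subsingleton hS fun x hx y hy => h x hx y hy)
  let σ : Bool → S := fun b => if b then ⟨x, hx⟩ else ⟨y, hy⟩
  have hσ : σ.Injective := by
    intro a b
    cases a <;> cases b <;> simp [σ, hxy, hxy.symm]
  have hrelσ := hrel (FreeGroup.map σ w)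
    ((map_ne_one_iff _ (FreeGroup.map_injective hσ)).mpr hw1)
    -- `HasInfiniteGirth` evaluates a word over `S` after pushing it into `FreeGroup G` by `>>=`.
    (by rw [FreeGroup.lift_bind]; exact IsLaw.map hw _ _)
  have hlen := FreeGroup.norm_map_le σ w
  exact (hrelσ.trans hlen).not_gt (Nat.lt_succ_self _)

end Girth

namespace HNNExtension

section Degree

variable {G : Type*} [Group G] {A B : Subgroup G} {φ : A ≃* B}

def degree : HNNExtension G A B φ →* Multiplicative ℤ :=
  lift 1 (ofAdd 1) fun _ => by simp

@[simp] theorem degree_t : degree (t : HNNExtension G A B φ) = ofAdd 1 := by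
  simp [degree]

@[simp] theorem degree_of (g : G) : degree (of g : HNNExtension G A B φ) = 1 := by
  simp [degree]

end Degree

variable {G : Type*} [Group G] {B : Subgroup G} {φ : (⊤ : Subgroup G) ≃* B}

theorem exists_t_pow_mul_of_mul_inv (j : ℕ) (g : G) :
    ∃ g' : G, (t : HNNExtension G ⊤ B φ) ^ j * of g * (t ^ j)⁻¹ = of g' := by
  induction j generalizing g with
  | zero => exact ⟨g, by simp⟩
  | succ j ih =>
    obtain ⟨g', hg'⟩ := ih g
    refine ⟨φ ⟨g', Subgroup.mem_top g'⟩, ?_⟩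
    calc (t : HNNExtension G ⊤ B φ) ^ (j + 1) * of g * (t ^ (j + 1))⁻¹
        = t * of g' * t⁻¹ := by rw [← hg']; group
      _ = _ := by
        rw [mul_inv_eq_iff_eq_mul]; exact t_mul_of (φ := φ) ⟨g', Subgroup.mem_top g'⟩

theorem exists_eq_inv_t_pow_mul_of_mul_t_pow (x : HNNExtension G ⊤ B φ) :
    ∃ (m k : ℕ) (g : G), x = (t ^ m)⁻¹ * of g * t ^ k := by
  induction x using HNNExtension.induction_on with
  | of g => exact ⟨0, 0, g, by simp⟩
  | t => exact ⟨0, 1, 1, by simp⟩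
  | inv x hx =>
    obtain ⟨m, k, g, rfl⟩ := hx
    exact ⟨k, m, g⁻¹, by rw [_root_.map_inv]; group⟩
  | mul x y hx hy =>
    obtain ⟨m, k, g, rfl⟩ := hx
    obtain ⟨p, q, h, rfl⟩ := hy
    rcases le_total p k with hpk | hkp
    · obtain ⟨j, rfl⟩ : ∃ j, k = j + p := ⟨k - p, by omega⟩
      obtain ⟨h', hh'⟩ := exists_t_pow_mul_of_mul_inv (φ := φ) j h
      refine ⟨m, j + q, g * h', ?_⟩
      rw [_root_.map_mul, ← hh']
      group
    · obtain ⟨j, rfl⟩ : ∃ j, p = j + k := ⟨p - k, by omega⟩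
      obtain ⟨g', hg'⟩ := exists_t_pow_mul_of_mul_inv (φ := φ) j g
      refine ⟨j + m, q, g' * h, ?_⟩
      rw [_root_.map_mul, ← hg']
      group

theorem exists_eq_conj_of_degree_eq_one {x : HNNExtension G ⊤ B φ} (hx : degree x = 1) :
    ∃ (m : ℕ) (g : G), x = (t ^ m)⁻¹ * of g * t ^ m := by
  obtain ⟨m, k, g, rfl⟩ := exists_eq_inv_t_pow_mul_of_mul_t_pow x
  have hkm : k = m := by
    have hx' := congrArg toAdd hx
    simp only [_root_.map_mul, _root_.map_inv, _root_.map_pow, degree_t, degree_of, mul_one,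
      toAdd_mul, toAdd_inv, toAdd_pow, toAdd_ofAdd, toAdd_one, nsmul_eq_mul] at hx'
    omega
  exact ⟨m, g, by rw [hkm]⟩

theorem exists_forall_eq_conj_of_degree_eq_one {ι : Type*} [Finite ι]
    {c : ι → HNNExtension G ⊤ B φ} (hc : ∀ i, degree (c i) = 1) :
    ∃ (N : ℕ) (g : ι → G), ∀ i, c i = (t ^ N)⁻¹ * of (g i) * t ^ N := by
  choose m g hg using fun i => exists_eq_conj_of_degree_eq_one (hc i)
  obtain ⟨N, hN⟩ := Finite.exists_le m
  choose g' hg' using fun i => exists_t_pow_mul_of_mul_inv (φ := φ) (N - m i) (g i)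
  refine ⟨N, g', fun i => ?_⟩
  obtain ⟨j, hj⟩ : ∃ j, N = j + m i := ⟨N - m i, by have := hN i; omega⟩
  rw [hg i, ← hg' i, hj, Nat.add_sub_cancel]
  group

theorem isLaw_lift_of_mem_commutator {ι β : Type*} [Finite ι] {w : FreeGroup ι}
    (hw : IsLaw G w) {u : ι → FreeGroup β} (hu : ∀ i, u i ∈ commutator (FreeGroup β)) :
    IsLaw (HNNExtension G ⊤ B φ) (FreeGroup.lift u w) := by
  intro f
  have hdeg (i : ι) : degree (FreeGroup.lift f (u i)) = 1 :=
    Abelianization.commutator_subset_ker (degree.comp (FreeGroup.lift f)) (hu i)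
  obtain ⟨N, g, hg⟩ := exists_forall_eq_conj_of_degree_eq_one hdeg
  calc FreeGroup.lift f (FreeGroup.lift u w)
      = FreeGroup.lift (fun i => FreeGroup.lift f (u i)) w :=
        FreeGroup.lift_unique ((FreeGroup.lift f).comp (FreeGroup.lift u)) fun _ => by simp
    _ = FreeGroup.lift ((MulAut.conj (t ^ N)⁻¹).toMonoidHom.comp of ∘ g) w := by
        congr 2; funext i
        rw [hg, Function.comp_apply, MonoidHom.comp_apply, MulEquiv.coe_toMonoidHom,
          MulAut.conj_apply, inv_inv]
    _ = 1 := hw.lift_comp_eq_one _ g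

theorem satisfiesLaw_top (hG : SatisfiesLaw G) : SatisfiesLaw (HNNExtension G ⊤ B φ) := by
  obtain ⟨n, w, hw1, hw⟩ := hG
  exact satisfiesLaw_of_isLaw
    ((map_ne_one_iff _ (FreeGroup.injective_lift_conjCommutator Fin.val_injective)).mpr hw1)
    (isLaw_lift_of_mem_commutator hw fun i => FreeGroup.conjCommutator_mem_commutator i)

end HNNExtension

theorem semiproper_hnn_of_law_general
    {G : Type*} [Group G] (hlaw : SatisfiesLaw G)
    (B : Subgroup G) (φ : (⊤ : Subgroup G) ≃* B) :
    SatisfiesLaw (HNNExtension G ⊤ B φ) ∧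
      (¬IsCyclic (HNNExtension G ⊤ B φ) →
        ¬HasInfiniteGirth (HNNExtension G ⊤ B φ)) :=
  have hΓ := HNNExtension.satisfiesLaw_top (φ := φ) hlaw
  ⟨hΓ, hΓ.not_hasInfiniteGirth⟩

/-- A semi-proper HNN extension of a finitely generated group satisfying a law
also satisfies a law; in particular, if it is not cyclic, it has finite girth. -/
theorem semiproper_hnn_of_law
    {G : Type*} [Group G] (hfg : Group.FG G) (hlaw : SatisfiesLaw G)
    (B : Subgroup G) (φ : (⊤ : Subgroup G) ≃* B) :
    SatisfiesLaw (HNNExtension G ⊤ B φ) ∧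
      (¬IsCyclic (HNNExtension G ⊤ B φ) →
        ¬HasInfiniteGirth (HNNExtension G ⊤ B φ)) :=
  semiproper_hnn_of_law_general hlaw B φ
end

section
/- Let G be a finitely generated group with finite generating set S = {s₁, ..., s_n} (1 ∉ S), and let Γ = (G, A, B, t) be an HNN extension with A, B proper subgroups such that S ∩ (A ∪ B) = ∅. Then for every r ≥ 2, the set S⁽ʳ⁾ = {t, tʳs₁t⁻²ʳ, t³ʳs₂t⁻⁴ʳ, ..., t⁽²ⁿ⁻¹⁾ʳs_n t⁻²ⁿʳ} generates Γ and every nontrivial relation among elements of S⁽ʳ⁾ has length at least r; hence girth(Γ) = ∞. -/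
theorem FreeGroup.norm_map_le_s12 {α β : Type*} [DecidableEq α] [DecidableEq β] (f : α → β)
    (x : FreeGroup α) : norm (map f x) ≤ norm x := by
  conv_lhs => rw [← mk_toWord (x := x), map.mk]
  exact norm_mk_le.trans (List.length_map _).le

theorem FreeGroup.IsReduced.exists_eq_replicate_append {α : Type*} {L : List (α × Bool)}
    (h : FreeGroup.IsReduced L) (a : α) :
    ∃ (p : ℕ) (ε : Bool) (tail : List (α × Bool)),
      L = List.replicate p (a, ε) ++ tail ∧ ∀ x ∈ tail.head?, x.1 ≠ a := by
  induction L with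
  | nil => exact ⟨0, true, [], rfl, by simp⟩
  | cons x L ih =>
    by_cases hx : x.1 = a
    · obtain ⟨p, ε, tail, rfl, htail⟩ := ih h.tail
      obtain ⟨a', ε'⟩ := x
      subst hx
      cases p with
      | zero => exact ⟨1, ε', tail, rfl, htail⟩
      | succ p =>
        have hε : ε' = ε := (FreeGroup.isReduced_cons_cons.1 h).1 rfl
        exact ⟨p + 2, ε, tail, by simp [hε, List.replicate_succ], htail⟩
    · exact ⟨0, true, x :: L, rfl, by simpa using hx⟩

theorem Int.exists_unit_mul_succ {k : ℤ} (hk : k ≠ 0) : ∃ (u : ℤˣ) (m : ℕ), k = u * (m + 1) := by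
  rcases Int.natAbs_eq k with h | h
  · exact ⟨1, k.natAbs - 1, by push_cast; omega⟩
  · exact ⟨-1, k.natAbs - 1, by push_cast; omega⟩

namespace HNNExtension

variable {G : Type*} [Group G] {A B : Subgroup G} {φ : A ≃* B}

theorem closure_insert_t_image_of_eq_top {S : Set G} (hS : Subgroup.closure S = ⊤) :
    Subgroup.closure (insert t (of '' S)) = (⊤ : Subgroup (HNNExtension G A B φ)) := by
  have hof : (of : G →* HNNExtension G A B φ).range ≤ Subgroup.closure (insert t (of '' S)) := by
    rw [MonoidHom.range_eq_map, ← hS, MonoidHom.map_closure]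
    exact Subgroup.closure_mono (Set.subset_insert _ _)
  rw [Subgroup.eq_top_iff']
  intro x
  induction x using induction_on with
  | of g => exact hof ⟨g, rfl⟩
  | t => exact Subgroup.subset_closure (Set.mem_insert _ _)
  | mul x y hx hy => exact mul_mem hx hy
  | inv x hx => exact inv_mem hx

theorem exists_reducedList_prod_eq {k : ℤ} {L : List (G × ℤ)} (hk : k ≠ 0)
    (hL : ∀ p ∈ L, p.1 ∉ A ∧ p.1 ∉ B ∧ p.2 ≠ 0) :
    ∃ M : List (ℤˣ × G), M ≠ [] ∧
      M.IsChain (fun a b => a.2 ∈ toSubgroup A B a.1 → a.1 = b.1) ∧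
      (M.map fun x => t ^ (x.1 : ℤ) * of x.2).prod =
        (t ^ k * (L.map fun p => of p.1 * t ^ p.2).prod : HNNExtension G A B φ) := by
  induction L generalizing k with
  | nil =>
    obtain ⟨u, m, rfl⟩ := Int.exists_unit_mul_succ hk
    refine ⟨List.replicate (m + 1) (u, 1), by simp,
      List.isChain_replicate_of_rel _ fun _ => rfl, ?_⟩
    simp only [List.map_replicate, map_one, mul_one, List.prod_replicate, List.map_nil,
      List.prod_nil, zpow_mul]
    norm_cast
  | cons p L ih =>
    obtain ⟨g, k'⟩ := p
    obtain ⟨hgA, hgB, hk'⟩ := hL (g, k') (by simp)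
    obtain ⟨M, -, hMchain, hMprod⟩ := ih hk' (fun p hp => hL p (by simp [hp]))
    obtain ⟨u, m, rfl⟩ := Int.exists_unit_mul_succ hk
    have hg : g ∉ toSubgroup A B u := by
      rcases Int.units_eq_one_or u with rfl | rfl
      exacts [hgA, hgB]
    refine ⟨List.replicate m (u, 1) ++ (u, g) :: M, by simp, ?_, ?_⟩
    · rw [List.isChain_append, List.isChain_cons]
      refine ⟨List.isChain_replicate_of_rel _ fun _ => rfl, ⟨fun _ _ h => absurd h hg, hMchain⟩, ?_⟩
      intro x hx y hy _
      rw [List.head?_cons, Option.mem_some_iff] at hy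
      rw [← hy, List.eq_of_mem_replicate (List.mem_of_mem_getLast? hx)]
    · simp only [List.map_append, List.map_cons, List.prod_append, List.prod_cons, hMprod,
        List.map_replicate, List.prod_replicate, map_one, mul_one]
      rw [zpow_mul, zpow_add_one, zpow_natCast]
      simp only [mul_assoc]

theorem zpow_t_mul_prod_ne_one {k : ℤ} {L : List (G × ℤ)} (hk : k ≠ 0)
    (hL : ∀ p ∈ L, p.1 ∉ A ∧ p.1 ∉ B ∧ p.2 ≠ 0) :
    (t ^ k * (L.map fun p => of p.1 * t ^ p.2).prod : HNNExtension G A B φ) ≠ 1 := by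
  obtain ⟨M, hM, hchain, hprod⟩ := exists_reducedList_prod_eq (φ := φ) hk hL
  intro h1
  let w : NormalWord.ReducedWord G A B := ⟨1, M, hchain⟩
  have hw : w.prod φ ∈ (of : G →* HNNExtension G A B φ).range :=
    ⟨1, by simp [w, NormalWord.ReducedWord.prod, hprod, h1]⟩
  exact hM (ReducedWord.toList_eq_nil_of_mem_of_range φ w hw)

section SeparatedGenerators

variable {n : ℕ}

/-- The letter `(i, b)` of `S⁽ʳ⁾` is
`t^(leadingExp i b * r) * sᵢ^{±1} * t^(-trailingExp i b * r)`. -/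
def leadingExp (i : Fin n) (b : Bool) : ℕ := 2 * i + cond b 1 2

def trailingExp (i : Fin n) (b : Bool) : ℕ := 2 * i + cond b 2 1

theorem trailingExp_eq_leadingExp_iff {i j : Fin n} {b c : Bool} :
    trailingExp i b = leadingExp j c ↔ i = j ∧ b = !c := by
  cases b <;> cases c <;> simp [trailingExp, leadingExp, Fin.ext_iff] <;> omega

/-- `(k, [(g₁, m₁), …, (g_q, m_q)])` stands for `t^k * of g₁ * t^m₁ * ⋯ * of g_q * t^m_q`. -/
def syllables (s : Fin n → G) (r : ℕ) : List (Option (Fin n) × Bool) → ℤ × List (G × ℤ)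
  | [] => (0, [])
  | (none, b) :: l => ((syllables s r l).1 + cond b 1 (-1), (syllables s r l).2)
  | (some i, b) :: l => ((leadingExp i b * r : ℕ),
      (cond b (s i) (s i)⁻¹, (syllables s r l).1 - (trailingExp i b * r : ℕ)) ::
        (syllables s r l).2)

variable {s : Fin n → G} {r : ℕ}

theorem syllables_replicate_append_fst (p : ℕ) (ε : Bool) (l : List (Option (Fin n) × Bool)) :
    (syllables s r (List.replicate p (none, ε) ++ l)).1 =
      (syllables s r l).1 + cond ε (p : ℤ) (-p) := by
  induction p with
  | zero => cases ε <;> simp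
  | succ p ih =>
    rw [List.replicate_succ, List.cons_append, syllables, ih]
    cases ε <;> simp <;> omega

theorem le_leadingExp_mul (i : Fin n) (b : Bool) (r : ℕ) : r ≤ leadingExp i b * r :=
  Nat.le_mul_of_pos_left r (by cases b <;> simp [leadingExp])

theorem le_trailingExp_mul (i : Fin n) (b : Bool) (r : ℕ) : r ≤ trailingExp i b * r :=
  Nat.le_mul_of_pos_left r (by cases b <;> simp [trailingExp])

theorem syllables_fst_ne_zero {l : List (Option (Fin n) × Bool)} (hl : FreeGroup.IsReduced l)
    (hne : l ≠ []) (hlen : l.length < r) : (syllables s r l).1 ≠ 0 := by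
  obtain ⟨p, ε, tail, rfl, htail⟩ := hl.exists_eq_replicate_append none
  rw [syllables_replicate_append_fst]
  rcases tail with _ | ⟨⟨_ | j, c⟩, rest⟩
  · have hp : p ≠ 0 := by simpa using hne
    cases ε <;> simp [syllables] <;> omega
  · simp at htail
  · have := le_leadingExp_mul j c r
    simp only [List.length_append, List.length_replicate, List.length_cons] at hlen
    cases ε <;> simp only [syllables, cond_true, cond_false] <;> omega

theorem syllables_fst_ne_trailingExp {i : Fin n} {b : Bool} {l : List (Option (Fin n) × Bool)}
    (hl : FreeGroup.IsReduced ((some i, b) :: l)) (hlen : l.length < r) :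
    (syllables s r l).1 ≠ (trailingExp i b * r : ℕ) := by
  have hl' : FreeGroup.IsReduced l := List.IsChain.tail hl
  obtain ⟨p, ε, tail, rfl, htail⟩ := hl'.exists_eq_replicate_append none
  simp only [List.length_append, List.length_replicate] at hlen
  rw [syllables_replicate_append_fst]
  have he : (cond ε (p : ℤ) (-p)).natAbs = p := by cases ε <;> simp
  generalize cond ε (p : ℤ) (-p) = e at he ⊢
  rcases tail with _ | ⟨⟨_ | j, c⟩, rest⟩
  · have := le_trailingExp_mul i b r
    simp only [syllables]
    omega
  · simp at htail
  · intro h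
    simp only [syllables] at h
    have hdvd : (r : ℤ) ∣ e :=
      ⟨trailingExp i b - leadingExp j c, by push_cast at h; linear_combination h⟩
    have he0 : e = 0 := Int.eq_zero_of_abs_lt_dvd hdvd (by rw [Int.abs_eq_natAbs]; omega)
    have hp0 : p = 0 := by omega
    subst he0 hp0
    have hr : 0 < r := by simp only [List.length_cons] at hlen; omega
    have hexp : trailingExp i b = leadingExp j c :=
      (Nat.eq_of_mul_eq_mul_right hr (by exact_mod_cast h)).symm
    obtain ⟨rfl, rfl⟩ := trailingExp_eq_leadingExp_iff.1 hexp
    simpa using (FreeGroup.isReduced_cons_cons.1 hl).1 rfl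

theorem forall_mem_syllables_snd (hsep : ∀ i, s i ∉ A ∧ s i ∉ B)
    {l : List (Option (Fin n) × Bool)} (hl : FreeGroup.IsReduced l) (hlen : l.length < r) :
    ∀ p ∈ (syllables s r l).2, p.1 ∉ A ∧ p.1 ∉ B ∧ p.2 ≠ 0 := by
  induction l with
  | nil => simp [syllables]
  | cons x l ih =>
    have ih := ih (List.IsChain.tail hl) (by simp only [List.length_cons] at hlen; omega)
    obtain ⟨_ | i, b⟩ := x
    · simpa only [syllables] using ih
    · intro p hp
      simp only [syllables, List.mem_cons] at hp
      rcases hp with rfl | hp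
      · refine ⟨?_, ?_, sub_ne_zero.2 (syllables_fst_ne_trailingExp hl
          (by simp only [List.length_cons] at hlen; omega))⟩
        all_goals cases b <;> simp [hsep]
      · exact ih p hp

variable (A B φ)

def separatedGenerators (s : Fin n → G) (r : ℕ) : Option (Fin n) → HNNExtension G A B φ
  | none => t
  | some i => t ^ (((2 * (i : ℕ) + 1) * r : ℕ) : ℤ) * of (s i) *
      t ^ (-(((2 * (i : ℕ) + 2) * r : ℕ) : ℤ))

theorem lift_separatedGenerators_mk (l : List (Option (Fin n) × Bool)) :
    FreeGroup.lift (separatedGenerators A B φ s r) (FreeGroup.mk l) =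
      t ^ (syllables s r l).1 * ((syllables s r l).2.map fun p => of p.1 * t ^ p.2).prod := by
  rw [FreeGroup.lift_mk]
  induction l with
  | nil => simp [syllables]
  | cons x l ih =>
    simp only [List.map_cons, List.prod_cons, ih]
    obtain ⟨_ | i, b⟩ := x <;> cases b <;>
      simp only [syllables, separatedGenerators, leadingExp, trailingExp, cond_true, cond_false,
        List.map_cons, List.prod_cons, map_inv] <;> group

theorem closure_range_separatedGenerators (hgen : Subgroup.closure (Set.range s) = ⊤) :
    Subgroup.closure (Set.range (separatedGenerators A B φ s r)) = ⊤ := by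
  set H := Subgroup.closure (Set.range (separatedGenerators A B φ s r))
  have ht : t ∈ H := Subgroup.subset_closure ⟨none, rfl⟩
  rw [eq_top_iff, ← closure_insert_t_image_of_eq_top hgen, Subgroup.closure_le]
  rintro _ (rfl | ⟨_, ⟨i, rfl⟩, rfl⟩)
  · exact ht
  · have hsi : of (s i) = t ^ (-(((2 * (i : ℕ) + 1) * r : ℕ) : ℤ)) *
        separatedGenerators A B φ s r (some i) * t ^ (((2 * (i : ℕ) + 2) * r : ℕ) : ℤ) := by
      simp only [separatedGenerators]
      group
    rw [SetLike.mem_coe, hsi]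
    exact mul_mem (mul_mem (zpow_mem ht _) (Subgroup.subset_closure ⟨some i, rfl⟩)) (zpow_mem ht _)

theorem le_length_of_lift_separatedGenerators_eq_one (hsep : ∀ i, s i ∉ A ∧ s i ∉ B)
    {w : FreeGroup (Option (Fin n))} (hw : w ≠ 1)
    (h1 : FreeGroup.lift (separatedGenerators A B φ s r) w = 1) : r ≤ w.toWord.length := by
  by_contra! hlen
  have hne : w.toWord ≠ [] := by rwa [Ne, FreeGroup.toWord_eq_nil_iff]
  refine zpow_t_mul_prod_ne_one (φ := φ)
    (syllables_fst_ne_zero (s := s) FreeGroup.isReduced_toWord hne hlen)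
    (forall_mem_syllables_snd hsep FreeGroup.isReduced_toWord hlen) ?_
  rwa [← lift_separatedGenerators_mk, FreeGroup.mk_toWord]

end SeparatedGenerators

end HNNExtension

open scoped Classical in
theorem exists_finset_generating_of_le_length_of_lift_eq_one {H ι : Type*} [Group H] [Fintype ι]
    [DecidableEq ι] {f : ι → H} {r : ℕ} (hf : Subgroup.closure (Set.range f) = ⊤)
    (hrel : ∀ w : FreeGroup ι, w ≠ 1 → FreeGroup.lift f w = 1 → r ≤ w.toWord.length) :
    ∃ S : Finset H, Subgroup.closure (S : Set H) = ⊤ ∧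
      ∀ w : FreeGroup {x // x ∈ S}, w ≠ 1 →
        FreeGroup.lift (fun s => (s : H)) w = 1 → r ≤ w.toWord.length := by
  refine ⟨Finset.univ.image f, by simpa using hf, fun w hw h1 => ?_⟩
  choose σ hσ using fun x : {x // x ∈ Finset.univ.image f} => Finset.mem_image.1 x.2
  let τ : ι → {x // x ∈ Finset.univ.image f} := fun i => ⟨f i, by simp⟩
  have hτσ : τ ∘ σ = id := funext fun x => Subtype.ext (hσ x).2
  have hmap : FreeGroup.map σ w ≠ 1 := fun h =>
    hw (by simpa [FreeGroup.map.comp, hτσ, FreeGroup.map.id] using congrArg (FreeGroup.map τ) h)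
  -- `fun s => (s : H)` in the statement elaborates through the coercion
  -- `FreeGroup S → FreeGroup H`, so `h1` is about `lift (fun x => x) (w >>= fun a => pure ↑a)`.
  have hcomp : (FreeGroup.lift f).comp (FreeGroup.map σ) = (FreeGroup.lift fun x : H => x).comp
      (FreeGroup.lift fun x : {x // x ∈ Finset.univ.image f} => FreeGroup.of (x : H)) :=
    FreeGroup.ext_hom _ _ fun x => by simp [(hσ x).2]
  have hlift : FreeGroup.lift f (FreeGroup.map σ w) = 1 := (DFunLike.congr_fun hcomp w).trans h1
  calc r ≤ (FreeGroup.map σ w).toWord.length := hrel _ hmap hlift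
    _ ≤ w.toWord.length := FreeGroup.norm_map_le_s12 σ w

open scoped Classical in
theorem hnn_separated_generating_set_girth_general
    {G : Type*} [Group G] {n : ℕ} (s : Fin n → G)
    (hgen : Subgroup.closure (Set.range s) = ⊤)
    (A B : Subgroup G)
    (hsep : ∀ i, s i ∉ A ∧ s i ∉ B) (φ : A ≃* B) :
    (∀ r : ℕ, 2 ≤ r →
      ∀ f : Option (Fin n) → HNNExtension G A B φ,
        (f none = HNNExtension.t ∧ ∀ i : Fin n,
          f (some i) = HNNExtension.t ^ (((2 * (i : ℕ) + 1) * r : ℕ) : ℤ) *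
            HNNExtension.of (s i) *
            HNNExtension.t ^ (-(((2 * (i : ℕ) + 2) * r : ℕ) : ℤ))) →
        Subgroup.closure (Set.range f) = ⊤ ∧
          ∀ w : FreeGroup (Option (Fin n)), w ≠ 1 →
            FreeGroup.lift f w = 1 → r ≤ w.toWord.length) ∧
    HasInfiniteGirth (HNNExtension G A B φ) := by
  refine ⟨?_, fun r => exists_finset_generating_of_le_length_of_lift_eq_one
    (HNNExtension.closure_range_separatedGenerators A B φ (r := r) hgen)
    fun _ hw h1 => HNNExtension.le_length_of_lift_separatedGenerators_eq_one A B φ hsep hw h1⟩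
  rintro r - f ⟨hf_none, hf_some⟩
  obtain rfl : f = HNNExtension.separatedGenerators A B φ s r := funext fun
    | none => hf_none
    | some i => hf_some i
  exact ⟨HNNExtension.closure_range_separatedGenerators A B φ hgen,
    fun _ hw h1 => HNNExtension.le_length_of_lift_separatedGenerators_eq_one A B φ hsep hw h1⟩

open scoped Classical in
/-- If `G = ⟨s₁,…,s_n⟩` with `1 ∉ S` and `S` disjoint from `A ∪ B`, where `A, B`
are proper subgroups, then for every `r ≥ 2` the set
`S⁽ʳ⁾ = {t, tʳs₁t⁻²ʳ, …, t^{(2n-1)r} s_n t^{-2nr}}` generates the HNN extension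
`Γ = (G,A,B,t)` and admits no nontrivial relation of length `< r`; hence
`girth Γ = ∞`. -/
theorem hnn_separated_generating_set_girth
    {G : Type*} [Group G] {n : ℕ} (s : Fin n → G)
    (hone : ∀ i, s i ≠ 1)
    (hgen : Subgroup.closure (Set.range s) = ⊤)
    (A B : Subgroup G) (hA : A ≠ ⊤) (hB : B ≠ ⊤)
    (hsep : ∀ i, s i ∉ A ∧ s i ∉ B) (φ : A ≃* B) :
    (∀ r : ℕ, 2 ≤ r →
      ∀ f : Option (Fin n) → HNNExtension G A B φ,
        (f none = HNNExtension.t ∧ ∀ i : Fin n,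
          f (some i) = HNNExtension.t ^ (((2 * (i : ℕ) + 1) * r : ℕ) : ℤ) *
            HNNExtension.of (s i) *
            HNNExtension.t ^ (-(((2 * (i : ℕ) + 2) * r : ℕ) : ℤ))) →
        Subgroup.closure (Set.range f) = ⊤ ∧
          ∀ w : FreeGroup (Option (Fin n)), w ≠ 1 →
            FreeGroup.lift f w = 1 → r ≤ w.toWord.length) ∧
    HasInfiniteGirth (HNNExtension G A B φ) :=
  hnn_separated_generating_set_girth_general s hgen A B hsep φ
end

section
/- For n ≥ 2, the free abelian group ℤ² = ⟨a, b⟩ with the isomorphism φ: ⟨b⁻¹⟩ → ⟨aⁿb⁻¹⟩ sending b⁻¹ to aⁿb⁻¹ yields an HNN extension (ℤ², ⟨b⁻¹⟩, ⟨aⁿb⁻¹⟩, t) isomorphic to a semidirect product F₂ ⋊ ℤ where F₂ is the free group of rank 2. -/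
/-!
Writing `ℤ² = ⟨a⟩ × ⟨b⟩`, the HNN relation `t b⁻¹ t⁻¹ = aⁿ b⁻¹` (Mathlib's convention
`t * c = φ c * t`) says that conjugation by `b` sends `t` to `aⁿ t` while fixing `a`.
Hence `⟨a, t⟩` is normalised by `b`, and the group is the mapping torus `F(x, y) ⋊ ℤ` of the
transvection `x ↦ x, y ↦ xⁿ y`, via `a ↦ x`, `t ↦ y`, `b ↦ 1 ∈ ℤ`. Both maps come from
universal properties (of the HNN extension and of the semidirect product), and they are
inverse to each other on generators.
-/

open Multiplicative

theorem HNNExtension.lift_cond_of_zpowers {G H : Type*} [Group G] [Group H] {g : G}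
    {B : Subgroup G} {φ : Subgroup.zpowers g ≃* B} {f : G →* H} {t' : H}
    (h : t' * f g = f (φ ⟨g, Subgroup.mem_zpowers g⟩) * t') (c : Subgroup.zpowers g) :
    t' * f c = f (φ c) * t' := by
  obtain ⟨k, hk⟩ := c.2
  obtain rfl : c = ⟨g, Subgroup.mem_zpowers g⟩ ^ k := Subtype.ext hk.symm
  simpa only [map_zpow, SubgroupClass.coe_zpow] using (SemiconjBy.zpow_right h k).eq

theorem HNNExtension.t_mul_of_zpow {G : Type*} [Group G] {g : G} {B : Subgroup G}
    (φ : Subgroup.zpowers g ≃* B) (k : ℤ) :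
    (t : HNNExtension G _ B φ) * of (g ^ k) =
      of ((φ ⟨g, Subgroup.mem_zpowers g⟩ : G) ^ k) * t := by
  simpa only [map_zpow, SubgroupClass.coe_zpow] using
    t_mul_of (φ := φ) (⟨g, Subgroup.mem_zpowers g⟩ ^ k)

namespace FreeByCyclic

local notation "F₂" => FreeGroup (Fin 2)

abbrev x : F₂ := FreeGroup.of 0
abbrev y : F₂ := FreeGroup.of 1

def transvectionHom (m : ℤ) : F₂ →* F₂ := FreeGroup.lift ![x, x ^ m * y]

@[simp] theorem transvectionHom_x (m : ℤ) : transvectionHom m x = x := by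
  simp [transvectionHom]

@[simp] theorem transvectionHom_y (m : ℤ) : transvectionHom m y = x ^ m * y := by
  simp [transvectionHom]

theorem transvectionHom_comp (m m' : ℤ) :
    (transvectionHom m).comp (transvectionHom m') = transvectionHom (m + m') := by
  ext i
  fin_cases i <;> simp [← mul_assoc, ← zpow_add, add_comm]

theorem transvectionHom_zero : transvectionHom 0 = MonoidHom.id F₂ := by
  ext i
  fin_cases i <;> simp

def transvection (m : ℤ) : MulAut F₂ :=
  MonoidHom.toMulEquiv (transvectionHom m) (transvectionHom (-m))
    (by rw [transvectionHom_comp, neg_add_cancel, transvectionHom_zero])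
    (by rw [transvectionHom_comp, add_neg_cancel, transvectionHom_zero])

@[simp] theorem transvection_apply (m : ℤ) (w : F₂) : transvection m w = transvectionHom m w :=
  rfl

def transvectionAction (n : ℤ) : Multiplicative ℤ →* MulAut F₂ where
  toFun k := transvection (n * k.toAdd)
  map_one' := MulEquiv.ext fun w => by simp [transvectionHom_zero]
  map_mul' k l := MulEquiv.ext fun w => by
    simp [mul_add, ← transvectionHom_comp]

@[simp] theorem transvectionAction_apply (n : ℤ) (k : Multiplicative ℤ) (w : F₂) :
    transvectionAction n k w = transvectionHom (n * k.toAdd) w :=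
  rfl

@[simp] theorem transvectionAction_symm_apply (n : ℤ) (k : Multiplicative ℤ) (w : F₂) :
    (transvectionAction n k).symm w = transvectionHom (-(n * k.toAdd)) w :=
  rfl

def ofZ2 (n : ℤ) : Multiplicative (ℤ × ℤ) →* F₂ ⋊[transvectionAction n] Multiplicative ℤ where
  toFun g := ⟨x ^ g.toAdd.1, ofAdd g.toAdd.2⟩
  map_one' := rfl
  map_mul' g h := by
    ext
    · change x ^ (g * h).toAdd.1 = x ^ g.toAdd.1 * transvectionHom _ (x ^ h.toAdd.1)
      rw [map_zpow, transvectionHom_x, ← zpow_add]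
      rfl
    · rfl

theorem ofZ2_apply (n : ℤ) (g : Multiplicative (ℤ × ℤ)) :
    ofZ2 n g = ⟨x ^ g.toAdd.1, ofAdd g.toAdd.2⟩ :=
  rfl

abbrev a : Multiplicative (ℤ × ℤ) := ofAdd (1, 0)
abbrev b : Multiplicative (ℤ × ℤ) := ofAdd (0, 1)

theorem a_zpow_mul_b_zpow_toAdd (g : Multiplicative (ℤ × ℤ)) :
    a ^ g.toAdd.1 * b ^ g.toAdd.2 = g := by
  apply toAdd.injective
  simp

theorem b_zpow_mul_a_pow_mul_b_inv_zpow (n : ℕ) (k : ℤ) :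
    b ^ k * (a ^ n * b⁻¹) ^ k = a ^ ((n : ℤ) * k) := by
  apply toAdd.injective
  simp [mul_comm]

theorem ofZ2_a (n : ℤ) : ofZ2 n a = SemidirectProduct.inl x := by
  ext <;> simp [ofZ2_apply]

theorem ofZ2_b (n : ℤ) : ofZ2 n b = SemidirectProduct.inr (ofAdd 1) := by
  ext <;> simp [ofZ2_apply]

theorem semiconjBy_inl_y_ofZ2 (n : ℕ) :
    SemiconjBy (SemidirectProduct.inl y) (ofZ2 n b⁻¹) (ofZ2 n (a ^ n * b⁻¹)) := by
  ext
  · simp [ofZ2_apply, SemidirectProduct.mul_left, -SemidirectProduct.mk_eq_inl_mul_inr]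
  · rfl

section

variable (n : ℕ) (φ : Subgroup.zpowers b⁻¹ ≃* Subgroup.zpowers (a ^ n * b⁻¹))

local notation "E" => HNNExtension (Multiplicative (ℤ × ℤ)) _ _ φ

def hnnToMappingTorus
    (hφ : (φ ⟨b⁻¹, Subgroup.mem_zpowers _⟩).1 = a ^ n * b⁻¹) :
    E →* F₂ ⋊[transvectionAction n] Multiplicative ℤ :=
  HNNExtension.lift (ofZ2 n) (SemidirectProduct.inl y)
    (HNNExtension.lift_cond_of_zpowers (by rw [hφ]; exact semiconjBy_inl_y_ofZ2 n))

theorem of_b_zpow_mul_t_mul_inv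
    (hφ : (φ ⟨b⁻¹, Subgroup.mem_zpowers _⟩).1 = a ^ n * b⁻¹) (k : ℤ) :
    (HNNExtension.of b ^ k * HNNExtension.t * (HNNExtension.of b ^ k)⁻¹ : E) =
      HNNExtension.of a ^ ((n : ℤ) * k) * HNNExtension.t := by
  have h := HNNExtension.t_mul_of_zpow φ k
  rw [hφ] at h
  calc (HNNExtension.of b ^ k * HNNExtension.t * (HNNExtension.of b ^ k)⁻¹ : E)
      = HNNExtension.of (b ^ k) * (HNNExtension.t * HNNExtension.of (b⁻¹ ^ k)) := by
        simp only [mul_assoc, ← map_zpow, ← map_inv, inv_zpow]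
    _ = HNNExtension.of (b ^ k * (a ^ n * b⁻¹) ^ k) * HNNExtension.t := by
        rw [h, ← mul_assoc, ← map_mul]
    _ = HNNExtension.of a ^ ((n : ℤ) * k) * HNNExtension.t := by
        rw [b_zpow_mul_a_pow_mul_b_inv_zpow, map_zpow]

def mappingTorusToHNN
    (hφ : (φ ⟨b⁻¹, Subgroup.mem_zpowers _⟩).1 = a ^ n * b⁻¹) :
    F₂ ⋊[transvectionAction n] Multiplicative ℤ →* E :=
  SemidirectProduct.lift (FreeGroup.lift ![HNNExtension.of a, HNNExtension.t])
    (zpowersHom _ (HNNExtension.of b)) fun k => by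
      ext i
      fin_cases i
      · simpa [-map_zpow] using
          (((Commute.all b a).map HNNExtension.of).zpow_left _).mul_inv_cancel.symm
      · simp [-map_zpow, ← of_b_zpow_mul_t_mul_inv n φ hφ,
          map_zpow (FreeGroup.lift ![(HNNExtension.of a : E), HNNExtension.t])]

theorem mappingTorusToHNN_comp_hnnToMappingTorus
    (hφ : (φ ⟨b⁻¹, Subgroup.mem_zpowers _⟩).1 = a ^ n * b⁻¹) :
    (mappingTorusToHNN n φ hφ).comp (hnnToMappingTorus n φ hφ) = MonoidHom.id E := by
  apply HNNExtension.hom_ext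
  · refine MonoidHom.ext fun g => ?_
    conv_rhs => rw [← a_zpow_mul_b_zpow_toAdd g]
    simp [hnnToMappingTorus, mappingTorusToHNN, ofZ2_apply]
  · simp [hnnToMappingTorus, mappingTorusToHNN]

theorem hnnToMappingTorus_comp_mappingTorusToHNN
    (hφ : (φ ⟨b⁻¹, Subgroup.mem_zpowers _⟩).1 = a ^ n * b⁻¹) :
    (hnnToMappingTorus n φ hφ).comp (mappingTorusToHNN n φ hφ) = MonoidHom.id _ := by
  apply SemidirectProduct.hom_ext
  · refine FreeGroup.ext_hom _ _ fun i => ?_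
    fin_cases i <;> simp [hnnToMappingTorus, mappingTorusToHNN, ofZ2_a]
  · refine MonoidHom.ext_mint ?_
    simp [hnnToMappingTorus, mappingTorusToHNN, ofZ2_b]

def hnnEquivMappingTorus
    (hφ : (φ ⟨b⁻¹, Subgroup.mem_zpowers _⟩).1 = a ^ n * b⁻¹) :
    E ≃* F₂ ⋊[transvectionAction n] Multiplicative ℤ :=
  MonoidHom.toMulEquiv _ _ (mappingTorusToHNN_comp_hnnToMappingTorus n φ hφ)
    (hnnToMappingTorus_comp_mappingTorusToHNN n φ hφ)

end

end FreeByCyclic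

theorem hnn_Z2_iso_free_by_cyclic_general (n : ℕ) :
    ∀ (a b : Multiplicative (ℤ × ℤ)),
      a = Multiplicative.ofAdd (1, 0) → b = Multiplicative.ofAdd (0, 1) →
      ∀ (φ : (Subgroup.zpowers b⁻¹) ≃* (Subgroup.zpowers (a ^ n * b⁻¹))),
        ((φ ⟨b⁻¹, Subgroup.mem_zpowers _⟩ : Subgroup.zpowers (a ^ n * b⁻¹)) :
            Multiplicative (ℤ × ℤ)) = a ^ n * b⁻¹ →
        ∃ ψ : Multiplicative ℤ →* MulAut (FreeGroup (Fin 2)),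
          Nonempty
            (HNNExtension (Multiplicative (ℤ × ℤ))
                (Subgroup.zpowers b⁻¹) (Subgroup.zpowers (a ^ n * b⁻¹)) φ ≃*
              SemidirectProduct (FreeGroup (Fin 2)) (Multiplicative ℤ) ψ) := by
  rintro a b rfl rfl φ hφ
  exact ⟨_, ⟨FreeByCyclic.hnnEquivMappingTorus n φ hφ⟩⟩

/-- For `n ≥ 2`, the HNN extension `(ℤ², ⟨b⁻¹⟩, ⟨aⁿb⁻¹⟩, t)` of the free abelian
group `ℤ² = ⟨a, b⟩` along the isomorphism sending `b⁻¹` to `aⁿb⁻¹` is isomorphic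
to a semidirect product `F₂ ⋊ ℤ` with `F₂` free of rank 2. Here `ℤ²` is written
multiplicatively with `a = (1,0)`, `b = (0,1)`. -/
theorem hnn_Z2_iso_free_by_cyclic (n : ℕ) (hn : 2 ≤ n) :
    ∀ (a b : Multiplicative (ℤ × ℤ)),
      a = Multiplicative.ofAdd (1, 0) → b = Multiplicative.ofAdd (0, 1) →
      ∀ (φ : (Subgroup.zpowers b⁻¹) ≃* (Subgroup.zpowers (a ^ n * b⁻¹))),
        ((φ ⟨b⁻¹, Subgroup.mem_zpowers _⟩ : Subgroup.zpowers (a ^ n * b⁻¹)) :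
            Multiplicative (ℤ × ℤ)) = a ^ n * b⁻¹ →
        ∃ ψ : Multiplicative ℤ →* MulAut (FreeGroup (Fin 2)),
          Nonempty
            (HNNExtension (Multiplicative (ℤ × ℤ))
                (Subgroup.zpowers b⁻¹) (Subgroup.zpowers (a ^ n * b⁻¹)) φ ≃*
              SemidirectProduct (FreeGroup (Fin 2)) (Multiplicative ℤ) ψ) :=
  hnn_Z2_iso_free_by_cyclic_general n
end
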